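/- arXiv:1911.10236 — 11 statements merged into one kernel-verified Lean document; each statement's English description precedes it below -/
import Mathlib

section
/- For all n ≥ 1, the number of sequentially congruent partitions of n equals the number of partitions of n into perfect squares. -/
/-- A list of parts (weakly decreasing) is sequentially congruent:
`λ_i ≡ λ_{i+1} (mod i)` for `1 ≤ i ≤ r-1` and `λ_r ≡ 0 (mod r)`. -/
def SeqCongList (l : List ℕ) : Prop :=
  (∀ i, i + 1 < l.length → l.getD i 0 % (i + 1) = l.getD (i + 1) 0 % (i + 1)) ∧
  (l ≠ [] → l.length ∣ l.getD (l.length - 1) 0)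

/-- A multiset of parts is sequentially congruent if, listed in weakly
decreasing order, it satisfies `SeqCongList`. -/
def IsSeqCong (s : Multiset ℕ) : Prop :=
  ∃ l : List ℕ, (l : Multiset ℕ) = s ∧ l.Pairwise (· ≥ ·) ∧ SeqCongList l

/-- All parts are perfect squares of positive integers. -/
def AllSquares (s : Multiset ℕ) : Prop :=
  ∀ x ∈ s, ∃ m : ℕ, 0 < m ∧ x = m * m

open Finset

/-- weighted telescoping over ℤ -/
lemma tele_int (a : ℕ → ℤ) (r : ℕ) :
    ∑ i ∈ range r, ((i : ℤ) + 1) * (a i - a (i+1))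
      = (∑ i ∈ range r, a i) - r * a r := by
  induction r with
  | zero => simp
  | succ r ih => rw [Finset.sum_range_succ, ih, Finset.sum_range_succ]; push_cast; ring

lemma tele_int' (a : ℕ → ℤ) (j : ℕ) : ∀ r, j ≤ r →
    ∑ i ∈ Finset.Ico j r, (a i - a (i+1)) = a j - a r := by
  intro r
  induction r with
  | zero => intro h; interval_cases j; simp
  | succ r ih =>
    intro h
    rcases Nat.lt_or_ge j (r+1) with h' | h'
    · have hj : j ≤ r := by omega
      rw [Finset.sum_Ico_succ_top hj, ih hj]; ring
    · have : j = r + 1 := by omega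
      subst this; simp

lemma getD_anti {l : List ℕ} (hs : l.Pairwise (· ≥ ·)) {i j : ℕ} (hij : i ≤ j) :
    l.getD j 0 ≤ l.getD i 0 := by
  rcases Nat.lt_or_ge j l.length with hj | hj
  · have hi : i < l.length := lt_of_le_of_lt hij hj
    rw [List.getD_eq_getElem _ _ hj, List.getD_eq_getElem _ _ hi]
    rcases eq_or_lt_of_le hij with rfl | hlt
    · exact le_refl _
    · exact hs.rel_get_of_lt (a := ⟨i, hi⟩) (b := ⟨j, hj⟩) hlt
  · rw [List.getD_eq_default _ _ hj]; exact Nat.zero_le _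

lemma list_sum_eq (l : List ℕ) :
    l.sum = ∑ i ∈ range l.length, l.getD i 0 := by
  induction l with
  | nil => simp
  | cons a t ih =>
    rw [List.sum_cons, List.length_cons, Finset.sum_range_succ']
    simp [ih, List.getD_cons_succ]
    ring

lemma map_range_getD (l : List ℕ) :
    (List.range l.length).map (fun i => l.getD i 0) = l := by
  apply List.ext_getElem
  · simp
  · intro i h1 h2
    simp only [List.getElem_map, List.getElem_range]
    rw [List.getD_eq_getElem _ _ h2]

lemma list_range_map_sum (f : ℕ → ℕ) (R : ℕ) :
    ((List.range R).map f).sum = ∑ j ∈ range R, f j := by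
  induction R with
  | zero => simp
  | succ R ih => rw [List.range_succ, List.map_append, List.sum_append, Finset.sum_range_succ, ih]; simp

lemma msum_msum (s : Finset ℕ) (f : ℕ → Multiset ℕ) :
    (∑ i ∈ s, f i).sum = ∑ i ∈ s, (f i).sum := by
  classical
  induction s using Finset.cons_induction with
  | empty => simp
  | cons a s ha ih => rw [Finset.sum_cons, Multiset.sum_add, ih, Finset.sum_cons]

lemma sum_map_ite_count (s : Multiset ℕ) (v c : ℕ) :
    (s.map (fun x => if x = v then c else 0)).sum = c * s.count v := by
  induction s using Multiset.induction with
  | empty => simp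
  | cons a s ih =>
    by_cases h : a = v
    · simp [h, ih, Multiset.count_cons, mul_add]; ring
    · simp [h, Ne.symm h, ih, Multiset.count_cons]
/-- The forward map on sorted lists: multiplicity of `(i+1)²` is `(λᵢ-λᵢ₊₁)/(i+1)`. -/
def scF (l : List ℕ) : Multiset ℕ :=
  ∑ i ∈ range l.length,
    Multiset.replicate ((l.getD i 0 - l.getD (i+1) 0) / (i+1)) ((i+1)*(i+1))

def scLam (s : Multiset ℕ) (j : ℕ) : ℕ :=
  (s.map (fun x => if j + 1 ≤ x.sqrt then x.sqrt else 0)).sum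

def scR (s : Multiset ℕ) : ℕ := (s.map Nat.sqrt).sup

def scG (s : Multiset ℕ) : List ℕ := (List.range (scR s)).map (scLam s)

section Fside

variable {l : List ℕ} (hs : l.Pairwise (· ≥ ·)) (hc : SeqCongList l)
  (hpos : ∀ x ∈ l, 0 < x)

include hpos in
lemma getD_pos {i : ℕ} (hi : i < l.length) : 0 < l.getD i 0 := by
  rw [List.getD_eq_getElem _ _ hi]
  exact hpos _ (List.getElem_mem hi)

include hs hc in
lemma div_step {i : ℕ} (hi : i < l.length) :
    (i+1) ∣ (l.getD i 0 - l.getD (i+1) 0) := by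
  rcases Nat.lt_or_ge (i+1) l.length with h | h
  · exact (Nat.modEq_iff_dvd' (getD_anti hs (Nat.le_succ i))).mp (hc.1 i h).symm
  · have hlen : l.length = i + 1 := by omega
    have hne : l ≠ [] := by intro h; rw [h] at hi; simp at hi
    have := hc.2 hne
    rw [hlen] at this
    simp only [Nat.add_sub_cancel] at this
    rw [List.getD_eq_default _ _ (by omega : l.length ≤ i + 1), Nat.sub_zero]
    exact this

include hs hc in
lemma scF_sum : (scF l).sum = l.sum := by
  rw [scF, msum_msum]
  have hterm : ∀ i ∈ range l.length,
      (Multiset.replicate ((l.getD i 0 - l.getD (i+1) 0) / (i+1)) ((i+1)*(i+1))).sum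
        = (i+1) * (l.getD i 0 - l.getD (i+1) 0) := by
    intro i hi
    rw [Multiset.sum_replicate, smul_eq_mul]
    rw [Finset.mem_range] at hi
    obtain ⟨k, hk⟩ := div_step hs hc hi
    rw [hk, Nat.mul_div_cancel_left _ (Nat.succ_pos i)]
    ring
  rw [Finset.sum_congr rfl hterm]
  have endzero : l.getD l.length 0 = 0 := List.getD_eq_default _ _ le_rfl
  have : ((∑ i ∈ range l.length, (i+1) * (l.getD i 0 - l.getD (i+1) 0) : ℕ) : ℤ)
      = ((l.sum : ℕ) : ℤ) := by
    rw [Nat.cast_sum, list_sum_eq l, Nat.cast_sum]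
    have : ∀ i ∈ range l.length,
        (((i+1) * (l.getD i 0 - l.getD (i+1) 0) : ℕ) : ℤ)
          = ((i : ℤ)+1) * (((l.getD i 0 : ℕ) : ℤ) - ((l.getD (i+1) 0 : ℕ) : ℤ)) := by
      intro i hi
      rw [Nat.cast_mul, Nat.cast_sub (getD_anti hs (Nat.le_succ i))]
      push_cast; ring
    rw [Finset.sum_congr rfl this, tele_int (fun i => ((l.getD i 0 : ℕ) : ℤ))]
    simp [endzero]
  exact_mod_cast this

lemma scF_squares : ∀ x ∈ scF l, ∃ m : ℕ, 0 < m ∧ x = m * m := by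
  intro x hx
  rw [scF, Multiset.mem_sum] at hx
  obtain ⟨i, _, hmem⟩ := hx
  exact ⟨i+1, Nat.succ_pos i, (Multiset.eq_of_mem_replicate hmem)⟩

lemma scF_pos : ∀ x ∈ scF l, 0 < x := by
  intro x hx
  obtain ⟨m, hm, rfl⟩ := scF_squares x hx
  positivity
lemma scLam_msum (t : Finset ℕ) (f : ℕ → Multiset ℕ) (j : ℕ) :
    scLam (∑ i ∈ t, f i) j = ∑ i ∈ t, scLam (f i) j := by
  classical
  induction t using Finset.cons_induction with
  | empty => simp [scLam]
  | cons a t ha ih =>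
    rw [Finset.sum_cons, Finset.sum_cons, ← ih]
    simp [scLam, Multiset.map_add, Multiset.sum_add]

lemma scLam_replicate (c v j : ℕ) :
    scLam (Multiset.replicate c v) j = c * (if j + 1 ≤ v.sqrt then v.sqrt else 0) := by
  simp [scLam, Multiset.map_replicate, Multiset.sum_replicate]

lemma sqrt_sq (m : ℕ) : (m * m).sqrt = m := by
  have := Nat.sqrt_eq' m
  rwa [pow_two] at this

include hs hc in
lemma scLam_scF {j : ℕ} (hj : j ≤ l.length) : scLam (scF l) j = l.getD j 0 := by
  rw [scF, scLam_msum]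
  have hterm : ∀ i ∈ range l.length,
      scLam (Multiset.replicate ((l.getD i 0 - l.getD (i+1) 0) / (i+1)) ((i+1)*(i+1))) j
        = if j ≤ i then l.getD i 0 - l.getD (i+1) 0 else 0 := by
    intro i hi
    rw [Finset.mem_range] at hi
    rw [scLam_replicate, sqrt_sq]
    by_cases h : j ≤ i
    · rw [if_pos (by omega : j + 1 ≤ i + 1), if_pos h]
      obtain ⟨k, hk⟩ := div_step hs hc hi
      rw [hk, Nat.mul_div_cancel_left _ (Nat.succ_pos i)]
      ring
    · rw [if_neg (by omega : ¬ j + 1 ≤ i + 1), if_neg h, mul_zero]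
  rw [Finset.sum_congr rfl hterm]
  have hfilter : (range l.length).filter (fun i => j ≤ i) = Finset.Ico j l.length := by
    ext i; simp [Finset.mem_filter, Finset.mem_Ico]; omega
  rw [← Finset.sum_filter, hfilter]
  have endzero : l.getD l.length 0 = 0 := List.getD_eq_default _ _ le_rfl
  have key : ((∑ i ∈ Finset.Ico j l.length, (l.getD i 0 - l.getD (i+1) 0) : ℕ) : ℤ)
      = ((l.getD j 0 : ℕ) : ℤ) := by
    rw [Nat.cast_sum]
    have : ∀ i ∈ Finset.Ico j l.length,
        ((l.getD i 0 - l.getD (i+1) 0 : ℕ) : ℤ)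
          = ((l.getD i 0 : ℕ) : ℤ) - ((l.getD (i+1) 0 : ℕ) : ℤ) :=
      fun i _ => Nat.cast_sub (getD_anti hs (Nat.le_succ i))
    rw [Finset.sum_congr rfl this, tele_int' (fun i => ((l.getD i 0 : ℕ) : ℤ)) j l.length hj]
    simp [endzero]
  exact_mod_cast key

include hs hc hpos in
lemma scR_scF : scR (scF l) = l.length := by
  rcases Nat.eq_zero_or_pos l.length with h0 | h0
  · have : l = [] := List.length_eq_zero_iff.mp h0
    subst this; simp [scR, scF]
  apply le_antisymm
  · apply Multiset.sup_le.mpr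
    intro b hb
    rw [Multiset.mem_map] at hb
    obtain ⟨x, hx, rfl⟩ := hb
    obtain ⟨i, hi, hmem⟩ := Multiset.mem_sum.mp hx
    rw [Finset.mem_range] at hi
    rw [Multiset.eq_of_mem_replicate hmem, sqrt_sq]
    omega
  · -- the part ((r-1)+1)² occurs: multiplicity is getD (r-1) 0 / r > 0
    set r := l.length
    have hdvd : (r - 1 + 1) ∣ (l.getD (r-1) 0 - l.getD (r-1+1) 0) :=
      div_step hs hc (by omega)
    have hlast : l.getD (r-1+1) 0 = 0 := List.getD_eq_default _ _ (by omega)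
    have hp : 0 < l.getD (r-1) 0 := getD_pos hpos (by omega)
    have hmpos : 0 < (l.getD (r-1) 0 - l.getD (r-1+1) 0) / (r-1+1) := by
      rw [hlast, Nat.sub_zero] at hdvd ⊢
      exact Nat.div_pos (Nat.le_of_dvd hp hdvd) (by omega)
    have hmem : (r - 1 + 1) * (r - 1 + 1) ∈ scF l := by
      rw [scF, Multiset.mem_sum]
      exact ⟨r - 1, Finset.mem_range.mpr (by omega),
        Multiset.mem_replicate.mpr ⟨Nat.pos_iff_ne_zero.mp hmpos, rfl⟩⟩
    have : (r - 1 + 1) ≤ scR (scF l) :=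
      Multiset.le_sup (by
        rw [Multiset.mem_map]
        exact ⟨_, hmem, sqrt_sq _⟩)
    omega

include hs hc hpos in
lemma scG_scF : scG (scF l) = l := by
  rw [scG, scR_scF hs hc hpos]
  rw [show (List.range l.length).map (scLam (scF l))
      = (List.range l.length).map (fun i => l.getD i 0) from
    List.map_congr_left (fun i hi => scLam_scF hs hc (le_of_lt (List.mem_range.mp hi)))]
  exact map_range_getD l
end Fside

section Gside

variable {s : Multiset ℕ} (hsq : ∀ x ∈ s, ∃ m : ℕ, 0 < m ∧ x = m * m)

lemma sqrt_le_scR {x : ℕ} (hx : x ∈ s) : x.sqrt ≤ scR s :=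
  Multiset.le_sup (Multiset.mem_map.mpr ⟨x, hx, rfl⟩)

lemma exists_big' {j : ℕ} (hj : j < scR s) : ∃ x ∈ s, j + 1 ≤ x.sqrt := by
  by_contra h
  push_neg at h
  have hle : scR s ≤ j := Multiset.sup_le.mpr (fun b hb => by
    obtain ⟨x, hx, rfl⟩ := Multiset.mem_map.mp hb
    exact Nat.lt_succ_iff.mp (h x hx))
  omega

lemma scLam_pos {j : ℕ} (hj : j < scR s) : 0 < scLam s j := by
  obtain ⟨x, hx, hbig⟩ := exists_big' hj
  have hmem : (if j + 1 ≤ x.sqrt then x.sqrt else 0)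
      ∈ s.map (fun x => if j + 1 ≤ x.sqrt then x.sqrt else 0) :=
    Multiset.mem_map.mpr ⟨x, hx, rfl⟩
  have := Multiset.le_sum_of_mem hmem
  rw [if_pos hbig] at this
  rw [scLam]
  omega

lemma scLam_anti {j k : ℕ} (hjk : j ≤ k) : scLam s k ≤ scLam s j := by
  apply Multiset.sum_map_le_sum_map
  intro x _
  by_cases h : k + 1 ≤ x.sqrt
  · rw [if_pos h, if_pos (by omega)]
  · rw [if_neg h]; exact Nat.zero_le _

lemma scG_sorted : (scG s).Pairwise (· ≥ ·) := by
  rw [scG, List.pairwise_map]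
  exact (List.pairwise_lt_range (n := scR s)).imp (fun h => scLam_anti (le_of_lt h))

lemma scG_length : (scG s).length = scR s := by simp [scG]

lemma scG_getD {j : ℕ} (hj : j < scR s) : (scG s).getD j 0 = scLam s j := by
  rw [List.getD_eq_getElem _ _ (by rw [scG_length]; exact hj)]
  simp [scG]

include hsq in
lemma scLam_step (j : ℕ) :
    scLam s j = scLam s (j+1) + (j+1) * s.count ((j+1)*(j+1)) := by
  have hmap : s.map (fun x => if j + 1 ≤ x.sqrt then x.sqrt else 0)
      = s.map (fun x => (if j + 2 ≤ x.sqrt then x.sqrt else 0)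
          + (if x = (j+1)*(j+1) then j+1 else 0)) := by
    apply Multiset.map_congr rfl
    intro x hx
    obtain ⟨m, hm, rfl⟩ := hsq x hx
    rw [sqrt_sq]
    have hiff : m * m = (j+1)*(j+1) ↔ m = j + 1 := Nat.mul_self_inj
    rcases Nat.lt_trichotomy m (j+1) with h | h | h
    · rw [if_neg (by omega), if_neg (by omega), if_neg (by rw [hiff]; omega)]
    · rw [if_pos (by omega), if_neg (by omega), if_pos (by rw [hiff]; omega)]
      omega
    · rw [if_pos (by omega), if_pos (by omega), if_neg (by rw [hiff]; omega)]
      omega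
  rw [scLam, hmap, Multiset.sum_map_add, sum_map_ite_count]
  rfl

include hsq in
lemma scLam_top : scLam s (scR s) = 0 := by
  rw [scLam]
  have : s.map (fun x => if scR s + 1 ≤ x.sqrt then x.sqrt else 0) = s.map (fun _ => 0) :=
    Multiset.map_congr rfl (fun x hx => if_neg (by
      have := sqrt_le_scR hx; omega))
  rw [this]
  simp

include hsq in
lemma scG_seqcong : SeqCongList (scG s) := by
  constructor
  · intro i hi
    rw [scG_length] at hi
    rw [scG_getD (by omega), scG_getD (by omega), scLam_step hsq i,
      Nat.add_mul_mod_self_left]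
  · intro hne
    rw [scG_length]
    have hR : 0 < scR s := by
      by_contra h
      exact hne (by simp [scG, Nat.le_zero.mp (not_lt.mp h)])
    rw [scG_getD (by omega)]
    have := scLam_step hsq (scR s - 1)
    rw [show scR s - 1 + 1 = scR s from by omega, scLam_top hsq, Nat.zero_add] at this
    exact ⟨_, this⟩

include hsq in
lemma scG_getD' {j : ℕ} (hj : j ≤ scR s) : (scG s).getD j 0 = scLam s j := by
  rcases Nat.lt_or_ge j (scR s) with h | h
  · exact scG_getD h
  · have hj' : j = scR s := by omega
    subst hj'
    rw [List.getD_eq_default _ _ (by rw [scG_length])]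
    exact (scLam_top hsq).symm

include hsq in
lemma scF_scG : scF (scG s) = s := by
  rw [scF, scG_length]
  have hterm : ∀ j ∈ range (scR s),
      Multiset.replicate (((scG s).getD j 0 - (scG s).getD (j+1) 0) / (j+1)) ((j+1)*(j+1))
        = Multiset.replicate (s.count ((j+1)*(j+1))) ((j+1)*(j+1)) := by
    intro j hj
    rw [Finset.mem_range] at hj
    rw [scG_getD' hsq (by omega), scG_getD' hsq (by omega), scLam_step hsq j,
      Nat.add_sub_cancel_left, Nat.mul_div_cancel_left _ (Nat.succ_pos j)]
  rw [Finset.sum_congr rfl hterm]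
  ext a
  rw [Multiset.count_sum']
  by_cases ha : ∃ k ∈ range (scR s), (k+1)*(k+1) = a
  · obtain ⟨k, hk, rfl⟩ := ha
    rw [Finset.sum_eq_single_of_mem k hk (fun b _ hbk => by
      rw [Multiset.count_replicate, if_neg (fun h => hbk (by
        have : b + 1 = k + 1 := Nat.mul_self_inj.mp h
        omega))])]
    rw [Multiset.count_replicate, if_pos rfl]
  · push_neg at ha
    have h1 : ∑ j ∈ range (scR s),
        Multiset.count a (Multiset.replicate (s.count ((j+1)*(j+1))) ((j+1)*(j+1))) = 0 := by
      apply Finset.sum_eq_zero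
      intro j hj
      rw [Multiset.count_replicate, if_neg (ha j hj)]
    rw [h1]
    symm
    rw [Multiset.count_eq_zero]
    intro hmem
    obtain ⟨m, hm, rfl⟩ := hsq _ hmem
    have hle : m ≤ scR s := by
      have := sqrt_le_scR hmem
      rwa [sqrt_sq] at this
    exact ha (m - 1) (Finset.mem_range.mpr (by omega)) (by
      congr 1 <;> omega)

lemma scLam_sum_swap (t : Multiset ℕ) (R : ℕ) :
    ∑ j ∈ range R, scLam t j
      = (t.map (fun x => ∑ j ∈ range R, if j + 1 ≤ x.sqrt then x.sqrt else 0)).sum := by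
  induction t using Multiset.induction with
  | empty => simp [scLam]
  | cons a t ih =>
    simp only [scLam, Multiset.map_cons, Multiset.sum_cons] at *
    rw [Finset.sum_add_distrib, ih]

include hsq in
lemma scG_sum : (scG s).sum = s.sum := by
  rw [scG, list_range_map_sum, scLam_sum_swap]
  have hid : s.map (fun x => ∑ j ∈ range (scR s), if j + 1 ≤ x.sqrt then x.sqrt else 0)
      = s.map id := by
    apply Multiset.map_congr rfl
    intro x hx
    obtain ⟨m, hm, rfl⟩ := hsq x hx
    have hle : m ≤ scR s := by
      have := sqrt_le_scR hx
      rwa [sqrt_sq] at this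
    have hcong : ∀ j ∈ range (scR s),
        (if j + 1 ≤ (m*m).sqrt then (m*m).sqrt else 0) = if j < m then m else 0 := by
      intro j _
      rw [sqrt_sq]
      by_cases h : j + 1 ≤ m
      · rw [if_pos h, if_pos (by omega)]
      · rw [if_neg h, if_neg (by omega)]
    rw [Finset.sum_congr rfl hcong, ← Finset.sum_filter]
    have hf : (range (scR s)).filter (fun j => j < m) = range m := by
      ext j; simp [Finset.mem_filter]; omega
    rw [hf, Finset.sum_const, Finset.card_range, smul_eq_mul]
    rfl
  rw [hid, Multiset.map_id]

end Gside
section Main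

variable {n : ℕ}

lemma seqCong_sort {p : n.Partition} (h : IsSeqCong p.parts) :
    SeqCongList (p.parts.sort (· ≥ ·)) := by
  obtain ⟨l, hco, hsort, hsc⟩ := h
  have hl : l = p.parts.sort (· ≥ ·) :=
    (fun hp h1 h2 => List.Perm.eq_of_pairwise' h1 h2 hp)
      (Multiset.coe_eq_coe.mp (by rw [hco, Multiset.sort_eq]))
      hsort (Multiset.pairwise_sort _ _)
  rwa [← hl]

def Fpart (p : n.Partition) (h : IsSeqCong p.parts) : n.Partition where
  parts := scF (p.parts.sort (· ≥ ·))
  parts_pos := fun {i} hi => scF_pos i hi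
  parts_sum := by
    rw [scF_sum (Multiset.pairwise_sort _ _) (seqCong_sort h),
      ← Multiset.sum_coe, Multiset.sort_eq]
    exact p.parts_sum

def Gpart (p : n.Partition) (h : AllSquares p.parts) : n.Partition where
  parts := ↑(scG p.parts)
  parts_pos := by
    intro i hi
    rw [Multiset.mem_coe, scG, List.mem_map] at hi
    obtain ⟨j, hj, rfl⟩ := hi
    exact scLam_pos (List.mem_range.mp hj)
  parts_sum := by
    rw [Multiset.sum_coe, scG_sum h]
    exact p.parts_sum

lemma Fpart_squares (p : n.Partition) (h : IsSeqCong p.parts) :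
    AllSquares (Fpart p h).parts := fun x hx => scF_squares x hx

lemma Gpart_seqcong (p : n.Partition) (h : AllSquares p.parts) :
    IsSeqCong (Gpart p h).parts :=
  ⟨scG p.parts, rfl, scG_sorted, scG_seqcong h⟩

lemma GF (p : n.Partition) (h : IsSeqCong p.parts) (h2 : AllSquares (Fpart p h).parts) :
    Gpart (Fpart p h) h2 = p := by
  apply Nat.Partition.ext
  show ↑(scG (scF (p.parts.sort (· ≥ ·)))) = p.parts
  rw [scG_scF (Multiset.pairwise_sort _ _) (seqCong_sort h)
    (fun x hx => p.parts_pos ((Multiset.mem_sort _).mp hx)), Multiset.sort_eq]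

lemma FG (p : n.Partition) (h : AllSquares p.parts) (h2 : IsSeqCong (Gpart p h).parts) :
    Fpart (Gpart p h) h2 = p := by
  apply Nat.Partition.ext
  show scF ((Gpart p h).parts.sort (· ≥ ·)) = p.parts
  have hsort : (Gpart p h).parts.sort (· ≥ ·) = scG p.parts :=
    (fun hp h1 h2 => List.Perm.eq_of_pairwise' h1 h2 hp)
      (Multiset.coe_eq_coe.mp (by rw [Multiset.sort_eq]; rfl))
      (Multiset.pairwise_sort _ _) scG_sorted
  rw [hsort, scF_scG h]

end Main

theorem seq_cong_eq_squares (n : ℕ) (hn : 1 ≤ n) :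
    {p : n.Partition | IsSeqCong p.parts}.ncard
      = {p : n.Partition | AllSquares p.parts}.ncard := by
  rw [← Nat.card_coe_set_eq, ← Nat.card_coe_set_eq]
  apply Nat.card_congr
  exact {
    toFun := fun p => ⟨Fpart p.1 p.2, Fpart_squares p.1 p.2⟩
    invFun := fun p => ⟨Gpart p.1 p.2, Gpart_seqcong p.1 p.2⟩
    left_inv := fun p => Subtype.ext (GF p.1 p.2 (Fpart_squares p.1 p.2))
    right_inv := fun p => Subtype.ext (FG p.1 p.2 (Gpart_seqcong p.1 p.2)) }
end

section
/- For all n ≥ 1, the number of frequency congruent partitions of n equals the number of partitions of n into perfect squares. -/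
/-- A multiset of parts is frequency congruent: every positive integer `i`
divides the multiplicity of `i` as a part. -/
def IsFreqCong (s : Multiset ℕ) : Prop :=
  ∀ i : ℕ, 0 < i → i ∣ s.count i

/-!
Glaisher-style bijection: in a frequency congruent partition the `m_i` copies of a part `i`
form `m_i / i` blocks of `i` copies, each of weight `i * i`; merging every block into one
square part gives a partition into squares of the same weight. Conversely, splitting each
square part `m * m` into `m` copies of `m` multiplies the multiplicity of `m` by `m`.
-/

open Multiset

def mergeSquares (s : Multiset ℕ) : Multiset ℕ :=
  ∑ i ∈ s.toFinset, replicate (s.count i / i) (i * i)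

def splitSquares (t : Multiset ℕ) : Multiset ℕ :=
  t.bind fun x => replicate (Nat.sqrt x) (Nat.sqrt x)

theorem exists_mul_self_of_mem_mergeSquares {s : Multiset ℕ} {j : ℕ}
    (hj : j ∈ mergeSquares s) : ∃ i ∈ s, j = i * i := by
  obtain ⟨i, hi, hj⟩ := mem_sum.1 hj
  exact ⟨i, mem_toFinset.1 hi, (mem_replicate.1 hj).2⟩

theorem pos_of_mem_mergeSquares {s : Multiset ℕ} (hs : ∀ i ∈ s, 0 < i) {j : ℕ}
    (hj : j ∈ mergeSquares s) : 0 < j := by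
  obtain ⟨i, hi, rfl⟩ := exists_mul_self_of_mem_mergeSquares hj
  exact Nat.mul_pos (hs i hi) (hs i hi)

theorem allSquares_mergeSquares {s : Multiset ℕ} (hs : ∀ i ∈ s, 0 < i) :
    AllSquares (mergeSquares s) := fun _ hj =>
  let ⟨i, hi, hj⟩ := exists_mul_self_of_mem_mergeSquares hj
  ⟨i, hs i hi, hj⟩

theorem count_mul_self_mergeSquares (s : Multiset ℕ) (k : ℕ) :
    (mergeSquares s).count (k * k) = s.count k / k := by
  rw [mergeSquares, count_sum', Finset.sum_eq_single k]
  · rw [count_replicate_self]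
  · intro i _ hik
    rw [count_replicate, if_neg (mt Nat.mul_self_inj.1 hik)]
  · intro hk
    rw [count_eq_zero.2 (mt mem_toFinset.2 hk), Nat.zero_div, replicate_zero, count_zero]

theorem sum_mergeSquares {s : Multiset ℕ} (hs : IsFreqCong s) :
    (mergeSquares s).sum = s.sum := by
  rw [mergeSquares, sum_sum, Finset.sum_multiset_count s]
  refine Finset.sum_congr rfl fun i _ => ?_
  rw [sum_replicate, smul_eq_mul, smul_eq_mul, ← mul_assoc]
  rcases Nat.eq_zero_or_pos i with rfl | hi
  · simp
  · rw [Nat.div_mul_cancel (hs i hi)]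

theorem mem_splitSquares {t : Multiset ℕ} {j : ℕ} :
    j ∈ splitSquares t ↔ ∃ x ∈ t, Nat.sqrt x ≠ 0 ∧ j = Nat.sqrt x := by
  simp only [splitSquares, mem_bind, mem_replicate]

theorem pos_of_mem_splitSquares {t : Multiset ℕ} {j : ℕ} (hj : j ∈ splitSquares t) :
    0 < j := by
  obtain ⟨x, -, hx, rfl⟩ := mem_splitSquares.1 hj
  exact Nat.pos_of_ne_zero hx

theorem count_splitSquares {t : Multiset ℕ} (ht : AllSquares t) (k : ℕ) :
    (splitSquares t).count k = k * t.count (k * k) := by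
  rw [splitSquares, count_bind, sum_map_eq_nsmul_single (k * k), Nat.sqrt_eq,
    count_replicate_self, smul_eq_mul, mul_comm]
  intro x hx hxt
  obtain ⟨m, -, rfl⟩ := ht x hxt
  rw [Nat.sqrt_eq, count_replicate, if_neg (mt (congrArg fun m => m * m) hx)]

theorem isFreqCong_splitSquares {t : Multiset ℕ} (ht : AllSquares t) :
    IsFreqCong (splitSquares t) := fun k _ =>
  count_splitSquares ht k ▸ dvd_mul_right k _

theorem sum_splitSquares {t : Multiset ℕ} (ht : AllSquares t) :
    (splitSquares t).sum = t.sum := by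
  rw [splitSquares, sum_bind]
  conv_rhs => rw [← map_id' t]
  refine congrArg sum (map_congr rfl fun x hx => ?_)
  obtain ⟨m, -, rfl⟩ := ht x hx
  rw [sum_replicate, Nat.sqrt_eq, smul_eq_mul]

theorem splitSquares_mergeSquares {s : Multiset ℕ} (hpos : ∀ i ∈ s, 0 < i)
    (hs : IsFreqCong s) : splitSquares (mergeSquares s) = s := by
  ext k
  rw [count_splitSquares (allSquares_mergeSquares hpos), count_mul_self_mergeSquares]
  rcases Nat.eq_zero_or_pos k with rfl | hk
  · rw [zero_mul, eq_comm, count_eq_zero]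
    exact fun h => (hpos 0 h).false
  · exact Nat.mul_div_cancel' (hs k hk)

theorem mergeSquares_splitSquares {t : Multiset ℕ} (ht : AllSquares t) :
    mergeSquares (splitSquares t) = t := by
  ext j
  by_cases hj : ∃ k, 0 < k ∧ j = k * k
  · obtain ⟨k, hk, rfl⟩ := hj
    rw [count_mul_self_mergeSquares, count_splitSquares ht, Nat.mul_div_cancel_left _ hk]
  · rw [count_eq_zero.2 (fun h => hj (ht j h)), count_eq_zero]
    intro h
    obtain ⟨i, hi, rfl⟩ := exists_mul_self_of_mem_mergeSquares h
    exact hj ⟨i, pos_of_mem_splitSquares hi, rfl⟩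

def freqCongEquivAllSquares (n : ℕ) :
    {p : n.Partition // IsFreqCong p.parts} ≃ {p : n.Partition // AllSquares p.parts} where
  toFun p :=
    ⟨⟨mergeSquares p.1.parts, pos_of_mem_mergeSquares fun _ => p.1.parts_pos,
      (sum_mergeSquares p.2).trans p.1.parts_sum⟩,
      allSquares_mergeSquares fun _ => p.1.parts_pos⟩
  invFun q :=
    ⟨⟨splitSquares q.1.parts, pos_of_mem_splitSquares,
      (sum_splitSquares q.2).trans q.1.parts_sum⟩,
      isFreqCong_splitSquares q.2⟩
  left_inv p := Subtype.ext <| Nat.Partition.ext <|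
    splitSquares_mergeSquares (fun _ => p.1.parts_pos) p.2
  right_inv q := Subtype.ext <| Nat.Partition.ext <| mergeSquares_splitSquares q.2

theorem freq_cong_eq_squares_general (n : ℕ) :
    {p : n.Partition | IsFreqCong p.parts}.ncard
      = {p : n.Partition | AllSquares p.parts}.ncard := by
  rw [← Nat.card_coe_set_eq, ← Nat.card_coe_set_eq]
  exact Nat.card_congr (freqCongEquivAllSquares n)

theorem freq_cong_eq_squares (n : ℕ) (hn : 1 ≤ n) :
    {p : n.Partition | IsFreqCong p.parts}.ncard
      = {p : n.Partition | AllSquares p.parts}.ncard :=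
  freq_cong_eq_squares_general n
end

section
/- Conjugation of partitions restricts to a bijection between the set of sequentially congruent partitions of n and the set of frequency congruent partitions of n. -/
/-- The conjugate partition: its `j`-th part is the number of parts `≥ j`. -/
def conjugate (s : Multiset ℕ) : Multiset ℕ :=
  ((Finset.Icc 1 s.sum).val.map fun j => (s.filter fun x => j ≤ x).card).filter
    fun x => 0 < x

namespace ConjAux

/-- number of parts of `s` that are `≥ j` -/
def fcnt (s : Multiset ℕ) (j : ℕ) : ℕ := Multiset.card (s.filter fun x => j ≤ x)

lemma fcnt_anti (s : Multiset ℕ) {j k : ℕ} (h : j ≤ k) : fcnt s k ≤ fcnt s j :=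
  Multiset.card_le_card (Multiset.monotone_filter_right s fun x hx => le_trans h hx)

lemma mem_le_sum {s : Multiset ℕ} {x : ℕ} (hx : x ∈ s) : x ≤ s.sum :=
  Multiset.single_le_sum (fun _ _ => Nat.zero_le _) _ hx

lemma fcnt_le_card (s : Multiset ℕ) (j : ℕ) : fcnt s j ≤ Multiset.card s :=
  Multiset.card_le_card (Multiset.filter_le _ s)

lemma card_le_sum {s : Multiset ℕ} (hs : ∀ x ∈ s, 0 < x) : Multiset.card s ≤ s.sum := by
  induction s using Multiset.induction_on with
  | empty => simp
  | cons a s ih =>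
    simp only [Multiset.card_cons, Multiset.sum_cons]
    have ha : 0 < a := hs a (Multiset.mem_cons_self a s)
    have := ih (fun x hx => hs x (Multiset.mem_cons_of_mem hx))
    omega

lemma fcnt_eq_zero {s : Multiset ℕ} {j : ℕ} (h : s.sum < j) : fcnt s j = 0 := by
  unfold fcnt
  rw [Multiset.card_eq_zero, Multiset.filter_eq_nil]
  intro a ha
  have := mem_le_sum ha
  omega

lemma fcnt_succ_add_count (s : Multiset ℕ) (m : ℕ) :
    fcnt s m = s.count m + fcnt s (m + 1) := by
  induction s using Multiset.induction_on with
  | empty => simp [fcnt]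
  | cons a s ih =>
    unfold fcnt at *
    rw [Multiset.filter_cons, Multiset.filter_cons, Multiset.count_cons]
    by_cases h1 : m ≤ a
    · by_cases h2 : m + 1 ≤ a
      · have hne : ¬ m = a := by omega
        simp [h1, h2, hne]
        simp only [Nat.lt_iff_add_one_le] at *
        omega
      · have heq : m = a := by omega
        subst heq
        simp [h1, h2]
        simp only [Nat.lt_iff_add_one_le] at *
        omega
    · have h2 : ¬ m + 1 ≤ a := by omega
      have hne : ¬ m = a := by omega
      simp [h1, h2, hne]
      simp only [Nat.lt_iff_add_one_le] at *
      omega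

lemma conjugate_eq (s : Multiset ℕ) :
    conjugate s
      = Multiset.filter (fun x => 0 < x)
          (Multiset.map (fcnt s) (Finset.Icc 1 s.sum).val) := rfl

lemma pos_conjugate (s : Multiset ℕ) : ∀ x ∈ conjugate s, 0 < x := by
  intro x hx
  exact (Multiset.mem_filter.mp hx).2

lemma sum_filter_pos (t : Multiset ℕ) :
    (Multiset.filter (fun x => 0 < x) t).sum = t.sum := by
  induction t using Multiset.induction_on with
  | empty => simp
  | cons a t ih =>
    rw [Multiset.filter_cons]
    by_cases ha : 0 < a
    · simp [ha, ih]
    · have : a = 0 := by omega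
      simp [ha, ih, this]

lemma sum_map_fcnt (B : ℕ) (s : Multiset ℕ) :
    ((Finset.Icc 1 B).val.map (fcnt s)).sum = (s.map fun x => min x B).sum := by
  induction s using Multiset.induction_on with
  | empty =>
    simp [fcnt]
  | cons a s ih =>
    have hstep : ∀ j : ℕ, fcnt (a ::ₘ s) j = (if j ≤ a then 1 else 0) + fcnt s j := by
      intro j
      unfold fcnt
      rw [Multiset.filter_cons]
      by_cases h : j ≤ a <;> simp [h] <;> omega
    calc ((Finset.Icc 1 B).val.map (fcnt (a ::ₘ s))).sum
        = ((Finset.Icc 1 B).val.map (fun j => (if j ≤ a then 1 else 0) + fcnt s j)).sum := by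
          rw [Multiset.map_congr rfl (fun j _ => hstep j)]
      _ = ((Finset.Icc 1 B).val.map (fun j => if j ≤ a then 1 else 0)).sum
            + ((Finset.Icc 1 B).val.map (fcnt s)).sum := by
          rw [← Multiset.sum_map_add]
      _ = min a B + (s.map fun x => min x B).sum := by
          rw [ih]
          congr 1
          have : ((Finset.Icc 1 B).val.map (fun j => if j ≤ a then 1 else 0)).sum
              = ∑ j ∈ Finset.Icc 1 B, (if j ≤ a then 1 else 0) := rfl
          have hf : Finset.filter (fun j => j ≤ a) (Finset.Icc 1 B) = Finset.Icc 1 (min a B) := by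
            ext j
            simp only [Finset.mem_filter, Finset.mem_Icc]
            omega
          rw [this, ← Finset.sum_filter, hf, Finset.sum_const, smul_eq_mul, mul_one, Nat.card_Icc]
          omega
      _ = ((a ::ₘ s).map fun x => min x B).sum := by
          simp

lemma sum_conjugate (s : Multiset ℕ) : (conjugate s).sum = s.sum := by
  rw [conjugate_eq, sum_filter_pos, sum_map_fcnt]
  have : s.map (fun x => min x s.sum) = s.map id := by
    apply Multiset.map_congr rfl
    intro x hx
    simp [min_eq_left (mem_le_sum hx)]
  rw [this, Multiset.map_id]

/-- the `m`-th largest part (1-indexed), computed as a count. -/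
def Dst (s : Multiset ℕ) (m : ℕ) : ℕ :=
  ((Finset.Icc 1 s.sum).filter fun j => m ≤ fcnt s j).card

lemma fcnt_conjugate {m : ℕ} (hm : 1 ≤ m) (s : Multiset ℕ) :
    fcnt (conjugate s) m = Dst s m := by
  unfold fcnt conjugate Dst
  rw [Multiset.filter_filter]
  rw [Multiset.filter_congr (q := fun x => m ≤ x)
    (fun x _ => ⟨fun h => h.1, fun h => ⟨h, by omega⟩⟩)]
  rw [Multiset.filter_map, Multiset.card_map]
  rw [Finset.card, Finset.filter_val]
  rfl

lemma count_conjugate {m : ℕ} (hm : 1 ≤ m) (s : Multiset ℕ) :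
    (conjugate s).count m = Dst s m - Dst s (m + 1) := by
  have h := fcnt_succ_add_count (conjugate s) m
  rw [fcnt_conjugate hm, fcnt_conjugate (by omega)] at h
  omega

lemma duality {s : Multiset ℕ} {m j : ℕ} (hm : 1 ≤ m) (hj : 1 ≤ j) :
    m ≤ Dst s j ↔ j ≤ fcnt s m := by
  constructor
  · intro h
    by_contra hc
    push_neg at hc
    have hsub : (Finset.Icc 1 s.sum).filter (fun k => j ≤ fcnt s k) ⊆ Finset.Icc 1 (m - 1) := by
      intro k hk
      rw [Finset.mem_filter, Finset.mem_Icc] at hk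
      rw [Finset.mem_Icc]
      refine ⟨hk.1.1, ?_⟩
      by_contra hkm
      push_neg at hkm
      have : fcnt s k ≤ fcnt s m := fcnt_anti s (by omega)
      omega
    have := Finset.card_le_card hsub
    rw [Nat.card_Icc] at this
    unfold Dst at h
    omega
  · intro h
    have hex : ∃ x ∈ s, m ≤ x := by
      have hpos : 0 < fcnt s m := by omega
      rw [fcnt, Multiset.card_pos_iff_exists_mem] at hpos
      obtain ⟨x, hx⟩ := hpos
      rw [Multiset.mem_filter] at hx
      exact ⟨x, hx.1, hx.2⟩
    obtain ⟨x, hxs, hmx⟩ := hex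
    have hmN : m ≤ s.sum := le_trans hmx (mem_le_sum hxs)
    have hsub : Finset.Icc 1 m ⊆ (Finset.Icc 1 s.sum).filter (fun k => j ≤ fcnt s k) := by
      intro k hk
      rw [Finset.mem_Icc] at hk
      rw [Finset.mem_filter, Finset.mem_Icc]
      exact ⟨⟨hk.1, le_trans hk.2 hmN⟩, le_trans h (fcnt_anti s hk.2)⟩
    have := Finset.card_le_card hsub
    rw [Nat.card_Icc] at this
    unfold Dst
    omega

lemma getD_mem_or_zero (l : List ℕ) (i : ℕ) : l.getD i 0 ∈ l ∨ l.getD i 0 = 0 := by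
  by_cases h : i < l.length
  · left
    rw [List.getD_eq_getElem l 0 h]
    exact List.getElem_mem h
  · right
    exact List.getD_eq_default l 0 (by omega)

lemma sorted_getD_anti {l : List ℕ} (hl : l.Pairwise (· ≥ ·)) {i k : ℕ} (h : i ≤ k) :
    l.getD k 0 ≤ l.getD i 0 := by
  by_cases hk : k < l.length
  · have hi : i < l.length := lt_of_le_of_lt h hk
    rw [List.getD_eq_getElem l 0 hk, List.getD_eq_getElem l 0 hi]
    exact hl.rel_get_of_le (a := ⟨i, hi⟩) (b := ⟨k, hk⟩) h
  · rw [List.getD_eq_default l 0 (by omega)]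
    exact Nat.zero_le _

lemma claimP {l : List ℕ} (hl : l.Pairwise (· ≥ ·)) :
    ∀ {m j : ℕ}, 1 ≤ m → 1 ≤ j → (m ≤ fcnt (↑l) j ↔ j ≤ l.getD (m - 1) 0) := by
  induction l with
  | nil =>
    intro m j hm hj
    simp [fcnt]
    omega
  | cons a t ih =>
    intro m j hm hj
    have hat : ∀ x ∈ t, x ≤ a := fun x hx => List.rel_of_pairwise_cons hl hx
    have ht : t.Pairwise (· ≥ ·) := hl.of_cons
    have hfc : fcnt (↑(a :: t)) j = (if j ≤ a then 1 else 0) + fcnt (↑t) j := by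
      unfold fcnt
      rw [show ((a :: t : List ℕ) : Multiset ℕ) = a ::ₘ (↑t) from rfl, Multiset.filter_cons]
      by_cases h : j ≤ a <;> simp [h, Nat.add_comm]
    by_cases hja : j ≤ a
    · rcases m with _ | m
      · omega
      rcases m with _ | m
      · rw [hfc, if_pos hja]
        simp only [Nat.sub_self, List.getD_cons_zero]
        constructor
        · intro _; exact hja
        · intro _; omega
      · have hIH := ih ht (m := m + 1) (j := j) (by omega) hj
        rw [hfc]
        simp only [if_pos hja]
        constructor
        · intro h
          have : m + 1 ≤ fcnt (↑t) j := by omega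
          have := hIH.mp this
          simpa using this
        · intro h
          have : j ≤ t.getD m 0 := by simpa using h
          have := hIH.mpr this
          omega
    · have h0 : fcnt (↑(a :: t)) j = 0 := by
        unfold fcnt
        rw [Multiset.card_eq_zero, Multiset.filter_eq_nil]
        intro x hx
        rw [Multiset.mem_coe, List.mem_cons] at hx
        rcases hx with rfl | hx
        · omega
        · have := hat x hx
          omega
      rw [h0]
      constructor
      · intro h; omega
      · intro h
        exfalso
        rcases getD_mem_or_zero (a :: t) (m - 1) with hmem | hz
        · rw [List.mem_cons] at hmem
          rcases hmem with he | hmem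
          · omega
          · have := hat _ hmem
            omega
        · omega

lemma Dst_eq_getD {s : Multiset ℕ} {l : List ℕ} (hl : l.Pairwise (· ≥ ·))
    (hls : (l : Multiset ℕ) = s) {m : ℕ} (hm : 1 ≤ m) :
    Dst s m = l.getD (m - 1) 0 := by
  subst hls
  have hg : l.getD (m - 1) 0 ≤ (l : Multiset ℕ).sum := by
    rcases getD_mem_or_zero l (m - 1) with hmem | hz
    · exact mem_le_sum (by simpa using hmem)
    · omega
  unfold Dst
  have hcongr : Finset.filter (fun j => m ≤ fcnt (↑l) j) (Finset.Icc 1 (l : Multiset ℕ).sum)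
      = Finset.Icc 1 (l.getD (m - 1) 0) := by
    ext j
    simp only [Finset.mem_filter, Finset.mem_Icc]
    constructor
    · intro ⟨⟨h1, _⟩, h2⟩
      exact ⟨h1, (claimP hl hm h1).mp h2⟩
    · intro ⟨h1, h2⟩
      exact ⟨⟨h1, le_trans h2 hg⟩, (claimP hl hm h1).mpr h2⟩
  rw [hcongr, Nat.card_Icc]
  omega

lemma freq_of_seq {s : Multiset ℕ} (hs : IsSeqCong s) : IsFreqCong (conjugate s) := by
  obtain ⟨l, hls, hsort, hseq⟩ := hs
  intro i hi
  rw [count_conjugate hi, Dst_eq_getD hsort hls hi, Dst_eq_getD hsort hls (by omega : 1 ≤ i + 1)]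
  have hidx : i + 1 - 1 = i := by omega
  rw [hidx]
  have hmono : l.getD i 0 ≤ l.getD (i - 1) 0 := sorted_getD_anti hsort (by omega)
  rcases lt_trichotomy i l.length with h | h | h
  · have h1 := hseq.1 (i - 1) (by omega)
    rw [show i - 1 + 1 = i from by omega] at h1
    exact (Nat.modEq_iff_dvd' hmono).mp (Nat.ModEq.symm h1)
  · have hne : l ≠ [] := by
      intro hnil
      rw [hnil] at h
      simp at h
      omega
    have h2 := hseq.2 hne
    have hz : l.getD i 0 = 0 := List.getD_eq_default l 0 (by omega)
    rw [hz, Nat.sub_zero, h]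
    exact h2
  · have hz1 : l.getD (i - 1) 0 = 0 := List.getD_eq_default l 0 (by omega)
    have hz2 : l.getD i 0 = 0 := List.getD_eq_default l 0 (by omega)
    rw [hz1, hz2]
    simp

lemma conjugate_coe (t : Multiset ℕ) :
    conjugate t = ((((List.range' 1 t.sum).map (fcnt t)).filter
      (fun x => decide (0 < x)) : List ℕ) : Multiset ℕ) := by
  rw [conjugate_eq, Nat.Icc_eq_range']
  show Multiset.filter (fun x => 0 < x)
      (Multiset.map (fcnt t) ((List.range' 1 (t.sum + 1 - 1) : List ℕ) : Multiset ℕ)) = _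
  rw [show t.sum + 1 - 1 = t.sum from by omega]
  rw [show Multiset.map (fcnt t) ((List.range' 1 t.sum : List ℕ) : Multiset ℕ)
      = (((List.range' 1 t.sum).map (fcnt t) : List ℕ) : Multiset ℕ) from rfl]
  rw [Multiset.filter_coe]

lemma M_sorted (t : Multiset ℕ) (B : ℕ) :
    ((List.range' 1 B).map (fcnt t)).Pairwise (· ≥ ·) := by
  rw [List.pairwise_map]
  apply List.Pairwise.imp ?_ (List.pairwise_lt_range' (s := 1) (n := B))
  intro a b hab
  exact fcnt_anti t (le_of_lt hab)

lemma M_getD (t : Multiset ℕ) (i : ℕ) :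
    ((List.range' 1 t.sum).map (fcnt t)).getD i 0 = fcnt t (i + 1) := by
  by_cases hi : i < t.sum
  · have hlen : i < ((List.range' 1 t.sum).map (fcnt t)).length := by
      simpa using hi
    rw [List.getD_eq_getElem _ 0 hlen]
    rw [List.getElem_map]
    congr 1
    have := List.getElem_range'_1 (n := 1) (m := t.sum) i (by simpa using hi)
    rw [this]
    omega
  · rw [List.getD_eq_default _ 0 (by simpa using hi)]
    exact (fcnt_eq_zero (by omega)).symm

lemma filter_pos_getD {M : List ℕ} (hM : M.Pairwise (· ≥ ·)) (i : ℕ) :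
    (M.filter (fun x => decide (0 < x))).getD i 0 = M.getD i 0 := by
  induction M generalizing i with
  | nil => simp
  | cons a M ih =>
    have hall : ∀ x ∈ M, x ≤ a := fun x hx => List.rel_of_pairwise_cons hM hx
    have hMs : M.Pairwise (· ≥ ·) := hM.of_cons
    by_cases ha : 0 < a
    · rw [show (a :: M).filter (fun x => decide (0 < x))
          = a :: M.filter (fun x => decide (0 < x)) from by simp [List.filter_cons, ha]]
      cases i with
      | zero => rfl
      | succ i => exact ih hMs i
    · have ha0 : a = 0 := by omega
      have hnil : (a :: M).filter (fun x => decide (0 < x)) = [] := by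
        rw [List.filter_eq_nil_iff]
        intro x hx
        rw [List.mem_cons] at hx
        rcases hx with rfl | hx
        · simp [ha0]
        · have := hall x hx
          simp
          omega
      rw [hnil]
      have hz : (a :: M).getD i 0 = 0 := by
        rcases getD_mem_or_zero (a :: M) i with hmem | hzz
        · rw [List.mem_cons] at hmem
          rcases hmem with he | hmem
          · rw [he]; exact ha0
          · have := hall _ hmem
            omega
        · exact hzz
      rw [hz]
      simp

lemma seq_of_freq {t : Multiset ℕ} (ht : IsFreqCong t) : IsSeqCong (conjugate t) := by
  classical
  set M : List ℕ := (List.range' 1 t.sum).map (fcnt t) with hMdef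
  set l : List ℕ := M.filter (fun x => decide (0 < x)) with hldef
  have hMsort : M.Pairwise (· ≥ ·) := M_sorted t t.sum
  have hlsort : l.Pairwise (· ≥ ·) := List.Pairwise.sublist (List.filter_sublist (l := M)) hMsort
  have hgetD : ∀ i, l.getD i 0 = fcnt t (i + 1) := by
    intro i
    rw [hldef, filter_pos_getD hMsort i, hMdef, M_getD]
  refine ⟨l, (conjugate_coe t).symm, hlsort, ?_, ?_⟩
  · intro i hilen
    rw [hgetD i, hgetD (i + 1)]
    have hc := fcnt_succ_add_count t (i + 1)
    obtain ⟨c, hcg⟩ := ht (i + 1) (by omega)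
    rw [hcg] at hc
    rw [hc]
    rw [Nat.add_comm ((i + 1) * c) (fcnt t (i + 1 + 1))]
    rw [Nat.add_mul_mod_self_left]
  · intro hne
    set r := l.length with hrdef
    have hr1 : 1 ≤ r := List.length_pos_iff.mpr hne
    rw [hgetD (r - 1), show r - 1 + 1 = r from by omega]
    have hz : fcnt t (r + 1) = 0 := by
      have h1 := hgetD r
      rw [List.getD_eq_default l 0 (le_refl r)] at h1
      omega
    have hc := fcnt_succ_add_count t r
    rw [hz, Nat.add_zero] at hc
    rw [hc]
    exact ht r hr1

lemma conj_conj {s : Multiset ℕ} (hpos : ∀ x ∈ s, 0 < x) :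
    conjugate (conjugate s) = s := by
  ext m
  rcases Nat.eq_zero_or_pos m with rfl | hm
  · rw [Multiset.count_eq_zero.mpr, Multiset.count_eq_zero.mpr]
    · intro hmem
      exact absurd (hpos 0 hmem) (by omega)
    · intro hmem
      exact absurd (pos_conjugate _ 0 hmem) (by omega)
  · rw [count_conjugate hm]
    have key : ∀ k, 1 ≤ k → Dst (conjugate s) k = fcnt s k := by
      intro k hk
      unfold Dst
      rw [sum_conjugate]
      have hcongr : Finset.filter (fun j => k ≤ fcnt (conjugate s) j) (Finset.Icc 1 s.sum)
          = Finset.Icc 1 (fcnt s k) := by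
        ext j
        simp only [Finset.mem_filter, Finset.mem_Icc]
        constructor
        · intro ⟨⟨h1, _⟩, h2⟩
          rw [fcnt_conjugate h1] at h2
          exact ⟨h1, (duality hk h1).mp h2⟩
        · intro ⟨h1, h2⟩
          have hle : fcnt s k ≤ s.sum := le_trans (fcnt_le_card s k) (card_le_sum hpos)
          refine ⟨⟨h1, le_trans h2 hle⟩, ?_⟩
          rw [fcnt_conjugate h1]
          exact (duality hk h1).mpr h2
      rw [hcongr, Nat.card_Icc]
      omega
    rw [key m hm, key (m + 1) (by omega)]
    have := fcnt_succ_add_count s m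
    omega

end ConjAux

open ConjAux in
theorem conjugate_bijOn (n : ℕ) :
    Set.BijOn conjugate
      {s : Multiset ℕ | (∀ x ∈ s, 0 < x) ∧ s.sum = n ∧ IsSeqCong s}
      {t : Multiset ℕ | (∀ x ∈ t, 0 < x) ∧ t.sum = n ∧ IsFreqCong t} := by
  have hmaps1 : Set.MapsTo conjugate
      {s : Multiset ℕ | (∀ x ∈ s, 0 < x) ∧ s.sum = n ∧ IsSeqCong s}
      {t : Multiset ℕ | (∀ x ∈ t, 0 < x) ∧ t.sum = n ∧ IsFreqCong t} := by
    rintro s ⟨hpos, hsum, hseq⟩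
    exact ⟨pos_conjugate s, by rw [sum_conjugate]; exact hsum, freq_of_seq hseq⟩
  have hmaps2 : Set.MapsTo conjugate
      {t : Multiset ℕ | (∀ x ∈ t, 0 < x) ∧ t.sum = n ∧ IsFreqCong t}
      {s : Multiset ℕ | (∀ x ∈ s, 0 < x) ∧ s.sum = n ∧ IsSeqCong s} := by
    rintro t ⟨hpos, hsum, hfreq⟩
    exact ⟨pos_conjugate t, by rw [sum_conjugate]; exact hsum, seq_of_freq hfreq⟩
  have hinv : Set.InvOn conjugate conjugate
      {s : Multiset ℕ | (∀ x ∈ s, 0 < x) ∧ s.sum = n ∧ IsSeqCong s}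
      {t : Multiset ℕ | (∀ x ∈ t, 0 < x) ∧ t.sum = n ∧ IsFreqCong t} :=
    ⟨fun s hs => conj_conj hs.1, fun t ht => conj_conj ht.1⟩
  exact Set.InvOn.bijOn hinv hmaps1 hmaps2
end

section
/- A partition λ is sequentially congruent if and only if its conjugate λ* is frequency congruent. -/
namespace SeqCongAux

lemma getD_anti {l : List ℕ} (hl : l.Pairwise (· ≥ ·)) {i j : ℕ} (h : i ≤ j) :
    l.getD j 0 ≤ l.getD i 0 := by
  rcases lt_or_ge j l.length with hj | hj
  · have hi : i < l.length := lt_of_le_of_lt h hj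
    rcases eq_or_lt_of_le h with rfl | hlt
    · rfl
    · have := List.pairwise_iff_get.mp hl ⟨i, hi⟩ ⟨j, hj⟩ hlt
      rw [List.getD_eq_getElem l 0 hj, List.getD_eq_getElem l 0 hi]
      exact this
  · rw [List.getD_eq_default l 0 hj]; exact Nat.zero_le _

lemma filter_len_iff {l : List ℕ} (hl : l.Pairwise (· ≥ ·)) {j : ℕ} (hj : 0 < j) (i : ℕ) :
    i < (l.filter (fun x => j ≤ x)).length ↔ j ≤ l.getD i 0 := by
  induction l generalizing i with
  | nil => simp; omega
  | cons a t ih =>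
    obtain ⟨ha, ht⟩ := List.pairwise_cons.mp hl
    by_cases h : j ≤ a
    · rw [List.filter_cons_of_pos (by simpa using h)]
      cases i with
      | zero => simpa using h
      | succ i' => simpa using ih ht i'
    · have hft : t.filter (fun x => j ≤ x) = [] := by
        rw [List.filter_eq_nil_iff]
        intro x hx
        simp only [decide_eq_true_eq]
        intro hjx
        exact h (le_trans hjx (ha x hx))
      rw [List.filter_cons_of_neg (by simpa using h), hft]
      simp only [List.length_nil, Nat.not_lt_zero, false_iff]
      intro hcon
      cases i with
      | zero => exact h (by simpa using hcon)
      | succ i' =>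
        have : t.getD i' 0 ≤ a := by
          rcases lt_or_ge i' t.length with hi | hi
          · rw [List.getD_eq_getElem t 0 hi]; exact ha _ (List.getElem_mem _)
          · rw [List.getD_eq_default t 0 hi]; exact Nat.zero_le _
        simp only [List.getD_cons_succ] at hcon
        exact h (le_trans hcon this)

lemma count_conj (l : List ℕ) (hl : l.Pairwise (· ≥ ·)) (k : ℕ) :
    Multiset.count (k + 1) (conjugate ↑l) = l.getD k 0 - l.getD (k + 1) 0 := by
  have hc : ∀ j : ℕ, ((↑l : Multiset ℕ).filter (fun x => j ≤ x)).card
      = (l.filter (fun x => j ≤ x)).length := by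
    intro j
    simp [Multiset.filter_coe]
  rw [conjugate, Multiset.count_filter_of_pos (Nat.succ_pos k), Multiset.count_map]
  have key : Multiset.filter
      (fun j => k + 1 = ((↑l : Multiset ℕ).filter (fun x => j ≤ x)).card)
      (Finset.Icc 1 (↑l : Multiset ℕ).sum).val
      = (Finset.Ioc (l.getD (k + 1) 0) (l.getD k 0)).val := by
    have : (Finset.filter
        (fun j => k + 1 = ((↑l : Multiset ℕ).filter (fun x => j ≤ x)).card)
        (Finset.Icc 1 (↑l : Multiset ℕ).sum)).val
        = (Finset.Ioc (l.getD (k + 1) 0) (l.getD k 0)).val := by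
      congr 1
      apply Finset.ext
      intro j
      simp only [Finset.mem_filter, Finset.mem_Icc, Finset.mem_Ioc]
      constructor
      · rintro ⟨⟨h1, _⟩, hcj⟩
        rw [hc] at hcj
        constructor
        · by_contra hle
          push_neg at hle
          have := (filter_len_iff hl h1 (k + 1)).mpr hle
          omega
        · exact (filter_len_iff hl h1 k).mp (by omega)
      · rintro ⟨h1, h2⟩
        have hj1 : 1 ≤ j := by omega
        have hN : l.getD k 0 ≤ (↑l : Multiset ℕ).sum := by
          rcases lt_or_ge k l.length with hk | hk
          · rw [List.getD_eq_getElem l 0 hk, Multiset.sum_coe]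
            exact List.le_sum_of_mem (List.getElem_mem _)
          · rw [List.getD_eq_default l 0 hk]; exact Nat.zero_le _
        refine ⟨⟨hj1, le_trans h2 hN⟩, ?_⟩
        rw [hc]
        have ha := (filter_len_iff hl hj1 k).mpr h2
        have hb : ¬ (k + 1 < (l.filter (fun x => j ≤ x)).length) := by
          rw [filter_len_iff hl hj1 (k + 1)]; omega
        omega
    rw [← this, Finset.filter_val]
  rw [key]
  exact Nat.card_Ioc _ _

lemma seqCongList_iff {l : List ℕ} :
    SeqCongList l ↔ ∀ k, l.getD k 0 % (k + 1) = l.getD (k + 1) 0 % (k + 1) := by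
  constructor
  · rintro ⟨h1, h2⟩ k
    rcases lt_trichotomy (k + 1) l.length with h | h | h
    · exact h1 k h
    · have hne : l ≠ [] := by intro he; simp [he] at h
      have hd := h2 hne
      rw [← h] at hd
      simp only [Nat.add_sub_cancel] at hd
      rw [List.getD_eq_default l 0 (le_of_eq h.symm), Nat.zero_mod,
        Nat.mod_eq_zero_of_dvd hd]
    · rw [List.getD_eq_default l 0 (by omega), List.getD_eq_default l 0 (by omega)]
  · intro h
    constructor
    · intro i _; exact h i
    · intro hne
      have hlen : 1 ≤ l.length := List.length_pos_iff.mpr hne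
      have h2' : l.length - 1 + 1 = l.length := by omega
      have := h (l.length - 1)
      rw [h2', List.getD_eq_default l 0 (le_refl _), Nat.zero_mod] at this
      exact Nat.dvd_of_mod_eq_zero this

lemma main (l : List ℕ) (hl : l.Pairwise (· ≥ ·)) :
    SeqCongList l ↔ IsFreqCong (conjugate ↑l) := by
  rw [seqCongList_iff]
  constructor
  · intro h i hi
    obtain ⟨k, rfl⟩ : ∃ k, i = k + 1 := ⟨i - 1, by omega⟩
    rw [count_conj l hl k]
    exact (Nat.modEq_iff_dvd' (getD_anti hl (Nat.le_succ k))).mp (h k).symm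
  · intro hf k
    have := hf (k + 1) (Nat.succ_pos k)
    rw [count_conj l hl k] at this
    exact ((Nat.modEq_iff_dvd' (getD_anti hl (Nat.le_succ k))).mpr this).symm

end SeqCongAux

theorem seqCong_iff_conjugate_freqCong (s : Multiset ℕ) (hpos : ∀ x ∈ s, 0 < x) :
    IsSeqCong s ↔ IsFreqCong (conjugate s) := by
  constructor
  · rintro ⟨l, rfl, hl, hsc⟩
    exact (SeqCongAux.main l hl).mp hsc
  · intro hf
    refine ⟨s.sort (· ≥ ·), Multiset.sort_eq s _, Multiset.pairwise_sort s _, ?_⟩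
    apply (SeqCongAux.main _ (Multiset.pairwise_sort s _)).mpr
    rw [Multiset.sort_eq]
    exact hf
end

section
/- The number of sequentially congruent partitions whose largest part equals n is p(n), the number of partitions of n. -/
namespace SeqCongProof

lemma msup_mem (s : Multiset ℕ) (hs : s ≠ 0) : s.sup ∈ s := by
  induction s using Multiset.induction with
  | empty => simp at hs
  | cons a t ih =>
    rcases eq_or_ne t 0 with rfl | ht
    · simp
    · rw [Multiset.sup_cons]
      rcases le_total a t.sup with h | h
      · rw [sup_eq_right.mpr h]; exact Multiset.mem_cons_of_mem (ih ht)
      · rw [sup_eq_left.mpr h]; exact Multiset.mem_cons_self a t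

lemma finset_sum_msum {ι : Type*} (s : Finset ι) (f : ι → Multiset ℕ) :
    (∑ i ∈ s, f i).sum = ∑ i ∈ s, (f i).sum := by
  induction s using Finset.cons_induction with
  | empty => simp
  | cons a t ha ih => simp [Finset.sum_cons, Multiset.sum_add, ih]

lemma sum_eq_sum_Icc (P : Multiset ℕ) (hpos : ∀ x ∈ P, 0 < x) :
    P.sum = ∑ j ∈ Finset.Icc 1 P.sup, j * P.count j := by
  conv_lhs => rw [← Multiset.toFinset_sum_count_nsmul_eq P]
  rw [finset_sum_msum]
  have h1 : ∀ a ∈ P.toFinset, (P.count a • ({a} : Multiset ℕ)).sum = a * P.count a := by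
    intro a _
    rw [Multiset.nsmul_singleton, Multiset.sum_replicate, smul_eq_mul, mul_comm]
  rw [Finset.sum_congr rfl h1]
  apply Finset.sum_subset
  · intro a ha
    rw [Multiset.mem_toFinset] at ha
    rw [Finset.mem_Icc]
    exact ⟨hpos a ha, Multiset.le_sup ha⟩
  · intro a _ ha
    rw [Multiset.mem_toFinset] at ha
    rw [Multiset.count_eq_zero_of_notMem ha, mul_zero]

/-- The key map: `phiFun P i = ∑_{j=i+1}^{sup P} j * count j`. -/
def phiFun (P : Multiset ℕ) (i : ℕ) : ℕ :=
  ∑ j ∈ Finset.Icc (i + 1) P.sup, j * P.count j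

def phiList (P : Multiset ℕ) : List ℕ := (List.range P.sup).map (phiFun P)

def Phi (P : Multiset ℕ) : Multiset ℕ := (phiList P : Multiset ℕ)

lemma phiFun_eq_zero (P : Multiset ℕ) {i : ℕ} (h : P.sup ≤ i) : phiFun P i = 0 := by
  unfold phiFun
  rw [Finset.Icc_eq_empty (by omega), Finset.sum_empty]

lemma phiFun_succ (P : Multiset ℕ) {i : ℕ} (h : i + 1 ≤ P.sup) :
    phiFun P i = (i + 1) * P.count (i + 1) + phiFun P (i + 1) := by
  unfold phiFun
  rw [show Finset.Icc (i + 1) P.sup = insert (i + 1) (Finset.Icc (i + 2) P.sup) by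
    ext x; simp only [Finset.mem_Icc, Finset.mem_insert]; omega]
  rw [Finset.sum_insert (by simp [Finset.mem_Icc])]

lemma phiFun_antitone (P : Multiset ℕ) : Antitone (phiFun P) := by
  apply antitone_nat_of_succ_le
  intro i
  rcases le_or_gt (i + 1) P.sup with h | h
  · rw [phiFun_succ P h]; omega
  · rw [phiFun_eq_zero P (by omega), phiFun_eq_zero P (by omega)]

lemma phiFun_zero_eq_sum (P : Multiset ℕ) (hpos : ∀ x ∈ P, 0 < x) :
    phiFun P 0 = P.sum := by
  rw [sum_eq_sum_Icc P hpos]; rfl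

lemma phiList_length (P : Multiset ℕ) : (phiList P).length = P.sup := by
  simp [phiList]

lemma phiList_getD (P : Multiset ℕ) {i : ℕ} (h : i < P.sup) :
    (phiList P).getD i 0 = phiFun P i := by
  unfold phiList
  rw [List.getD_eq_getElem _ _ (by simpa using h)]
  simp

lemma phiList_sorted (P : Multiset ℕ) : (phiList P).Pairwise (· ≥ ·) := by
  unfold phiList
  rw [List.pairwise_map]
  exact (List.pairwise_lt_range (n := P.sup)).imp (fun h => phiFun_antitone P (le_of_lt h))

lemma sup_pos (P : Multiset ℕ) (hpos : ∀ x ∈ P, 0 < x) (hP : P ≠ 0) : 1 ≤ P.sup := by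
  obtain ⟨a, ha⟩ := Multiset.exists_mem_of_ne_zero hP
  exact le_trans (hpos a ha) (Multiset.le_sup ha)

lemma mem_Phi (P : Multiset ℕ) {x : ℕ} :
    x ∈ Phi P ↔ ∃ i < P.sup, phiFun P i = x := by
  simp [Phi, phiList, List.mem_range]

/-- Forward direction: the image of a positive multiset lies in the set. -/
lemma Phi_mem (P : Multiset ℕ) (hpos : ∀ x ∈ P, 0 < x) (hP : P ≠ 0) :
    (∀ x ∈ Phi P, 0 < x) ∧ IsSeqCong (Phi P) ∧ (Phi P).sup = P.sum := by
  have hr1 : 1 ≤ P.sup := sup_pos P hpos hP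
  have hcr : 0 < P.count P.sup := Multiset.count_pos.mpr (msup_mem P hP)
  have hlast : 0 < phiFun P (P.sup - 1) := by
    have := phiFun_succ P (i := P.sup - 1) (by omega)
    rw [show P.sup - 1 + 1 = P.sup by omega] at this
    rw [this, phiFun_eq_zero P (le_refl _)]
    positivity
  refine ⟨?_, ⟨phiList P, rfl, phiList_sorted P, ?_, ?_⟩, ?_⟩
  · intro x hx
    obtain ⟨i, hi, rfl⟩ := (mem_Phi P).mp hx
    exact lt_of_lt_of_le hlast (phiFun_antitone P (by omega))
  · intro i hi
    rw [phiList_length] at hi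
    rw [phiList_getD P (by omega), phiList_getD P hi]
    rw [phiFun_succ P (by omega), Nat.mul_add_mod]
  · intro _
    rw [phiList_length, phiList_getD P (by omega)]
    have := phiFun_succ P (i := P.sup - 1) (by omega)
    rw [show P.sup - 1 + 1 = P.sup by omega] at this
    rw [this, phiFun_eq_zero P (le_refl _), add_zero]
    exact Dvd.intro _ rfl
  · apply le_antisymm
    · apply Multiset.sup_le.mpr
      intro x hx
      obtain ⟨i, _, rfl⟩ := (mem_Phi P).mp hx
      rw [← phiFun_zero_eq_sum P hpos]
      exact phiFun_antitone P (Nat.zero_le i)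
    · rw [← phiFun_zero_eq_sum P hpos]
      exact Multiset.le_sup ((mem_Phi P).mpr ⟨0, by omega, rfl⟩)

lemma Phi_inj {P Q : Multiset ℕ} (hP : ∀ x ∈ P, 0 < x) (hQ : ∀ x ∈ Q, 0 < x)
    (h : Phi P = Phi Q) : P = Q := by
  have hcard : P.sup = Q.sup := by
    have := congrArg Multiset.card h
    simpa [Phi, phiList] using this
  have hlist : phiList P = phiList Q := by
    apply List.Perm.eq_of_pairwise' (phiList_sorted P) (phiList_sorted Q)
      (Multiset.coe_eq_coe.mp h)
  have hfun : ∀ i < P.sup, phiFun P i = phiFun Q i := by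
    intro i hi
    rw [← phiList_getD P hi, ← phiList_getD Q (hcard ▸ hi), hlist]
  have hfun' : ∀ i ≤ P.sup, phiFun P i = phiFun Q i := by
    intro i hi
    rcases lt_or_eq_of_le hi with h' | h'
    · exact hfun i h'
    · subst h'
      rw [phiFun_eq_zero P (le_refl _), phiFun_eq_zero Q (hcard ▸ le_refl _)]
  ext a
  rcases Nat.eq_zero_or_pos a with rfl | ha
  · rw [Multiset.count_eq_zero_of_notMem (fun hm => lt_irrefl 0 (hP 0 hm)),
      Multiset.count_eq_zero_of_notMem (fun hm => lt_irrefl 0 (hQ 0 hm))]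
  rcases le_or_gt a P.sup with hle | hgt
  · have h1 := phiFun_succ P (i := a - 1) (by omega)
    have h2 := phiFun_succ Q (i := a - 1) (by omega)
    rw [show a - 1 + 1 = a by omega] at h1 h2
    have e1 := hfun' (a - 1) (by omega)
    have e2 := hfun' a hle
    rw [h1, h2, e2] at e1
    exact Nat.eq_of_mul_eq_mul_left ha (Nat.add_right_cancel e1)
  · rw [Multiset.count_eq_zero_of_notMem (fun hm => absurd (Multiset.le_sup hm) (by omega)),
      Multiset.count_eq_zero_of_notMem
        (fun hm => absurd (Multiset.le_sup hm) (by rw [← hcard]; omega))]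

/-- Inverse direction: every element of the set is in the range of `Phi`. -/
lemma exists_preimage (s : Multiset ℕ) (hpos : ∀ x ∈ s, 0 < x)
    (hsc : IsSeqCong s) (hs0 : s ≠ 0) :
    ∃ P : Multiset ℕ, (∀ x ∈ P, 0 < x) ∧ P.sum = s.sup ∧ Phi P = s := by
  obtain ⟨l, hl, hsort, hc1, hc2⟩ := hsc
  set r := l.length with hr
  have hl0 : l ≠ [] := by
    intro h; rw [h] at hl; exact hs0 hl.symm
  have hr1 : 1  ≤ r := by
    rw [hr]; exact List.length_pos_iff.mpr hl0
  -- getD of valid indices are elements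
  have hmem : ∀ i < r, l.getD i 0 ∈ s := by
    intro i hi
    rw [← hl, Multiset.mem_coe, List.getD_eq_getElem l 0 hi]
    exact List.getElem_mem hi
  have hposl : ∀ i < r, 0 < l.getD i 0 := fun i hi => hpos _ (hmem i hi)
  -- monotonicity of getD
  have hmono : ∀ i j, i ≤ j → j < r → l.getD j 0 ≤ l.getD i 0 := by
    intro i j hij hj
    rcases lt_or_eq_of_le hij with h' | h'
    · rw [List.getD_eq_getElem l 0 hj, List.getD_eq_getElem l 0 (by omega)]
      exact List.pairwise_iff_get.mp hsort ⟨i, by omega⟩ ⟨j, hj⟩ h'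
    · rw [h']
  -- g: list entries with zero padding
  set g : ℕ → ℕ := fun i => if i < r then l.getD i 0 else 0 with hg
  -- the inverse multiplicities
  set m : ℕ → ℕ := fun j => if j = r then l.getD (r - 1) 0 / r
    else (l.getD (j - 1) 0 - l.getD j 0) / j with hm
  have hgval : ∀ i, g i = if i < r then l.getD i 0 else 0 := fun i => by rw [hg]
  have hmval : ∀ j, m j = if j = r then l.getD (r - 1) 0 / r
      else (l.getD (j - 1) 0 - l.getD j 0) / j := fun j => by rw [hm]
  have hstep : ∀ j, 1 ≤ j → j ≤ r → g (j - 1) = j * m j + g j := by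
    intro j h1 h2
    by_cases hjr : j = r
    · subst hjr
      have hd := hc2 hl0
      rw [hgval, hgval, hmval, if_pos rfl, if_pos (by omega : r - 1 < r),
        if_neg (lt_irrefl r), Nat.mul_div_cancel' hd, add_zero]
    · have hlt : j < r := lt_of_le_of_ne h2 hjr
      have hmod := hc1 (j - 1) (by omega)
      rw [show j - 1 + 1 = j by omega] at hmod
      have hle : l.getD j 0 ≤ l.getD (j - 1) 0 := hmono (j - 1) j (by omega) hlt
      have hdvd : j ∣ (l.getD (j - 1) 0 - l.getD j 0) :=
        (Nat.modEq_iff_dvd' hle).mp hmod.symm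
      rw [hgval, hgval, hmval, if_neg hjr, if_pos (by omega : j - 1 < r), if_pos hlt,
        Nat.mul_div_cancel' hdvd]
      omega
  have hmr : 1 ≤ m r := by
    have hd := hc2 hl0
    have hp := hposl (r - 1) (by omega)
    rw [hmval, if_pos rfl]
    exact Nat.one_le_div_iff (by omega) |>.mpr (Nat.le_of_dvd hp hd)
  -- construct P
  set P : Multiset ℕ := ∑ j ∈ Finset.Icc 1 r, Multiset.replicate (m j) j with hPdef
  have hcount : ∀ a, P.count a = if a ∈ Finset.Icc 1 r then m a else 0 := by
    intro a
    rw [hPdef, Multiset.count_sum']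
    rw [Finset.sum_congr rfl (fun j _ => Multiset.count_replicate a j (m j)),
      Finset.sum_ite_eq' _ a m]
  have hmemP : ∀ x ∈ P, x ∈ Finset.Icc 1 r := by
    intro x hx
    by_contra hxn
    have h0 : P.count x = 0 := by rw [hcount x, if_neg hxn]
    have := Multiset.count_pos.mpr hx
    omega
  have hPpos : ∀ x ∈ P, 0 < x := by
    intro x hx
    have := hmemP x hx
    rw [Finset.mem_Icc] at this
    omega
  have hsup : P.sup = r := by
    apply le_antisymm
    · apply Multiset.sup_le.mpr
      intro x hx
      have := hmemP x hx
      rw [Finset.mem_Icc] at this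
      omega
    · apply Multiset.le_sup
      rw [← Multiset.count_pos, hcount]
      rw [if_pos (Finset.mem_Icc.mpr ⟨hr1, le_refl r⟩)]
      omega
  -- telescoping
  have htel : ∀ k, k ≤ r → phiFun P (r - k) = g (r - k) := by
    intro k
    induction k with
    | zero =>
      intro _
      rw [Nat.sub_zero, phiFun_eq_zero P (by omega), hgval, if_neg (lt_irrefl r)]
    | succ k ih =>
      intro hk
      have h1 : r - (k + 1) + 1 = r - k := by omega
      rw [phiFun_succ P (i := r - (k + 1)) (by omega), h1, ih (by omega),
        hcount, if_pos (Finset.mem_Icc.mpr ⟨by omega, by omega⟩)]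
      have := hstep (r - k) (by omega) (by omega)
      rw [show r - k - 1 = r - (k + 1) by omega] at this
      omega
  have hfun : ∀ i < r, phiFun P i = l.getD i 0 := by
    intro i hi
    have := htel (r - i) (by omega)
    rw [show r - (r - i) = i by omega] at this
    rw [this, hgval, if_pos hi]
  -- sup of s is head
  have hsups : s.sup = l.getD 0 0 := by
    obtain ⟨a, t, rfl⟩ := List.exists_cons_of_ne_nil hl0
    rw [← hl]
    have hall : ∀ b ∈ t, b ≤ a := (List.pairwise_cons.mp hsort).1
    apply le_antisymm
    · apply Multiset.sup_le.mpr
      intro x hx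
      rw [Multiset.mem_coe, List.mem_cons] at hx
      rcases hx with rfl | hx
      · simp [List.getD]
      · simpa [List.getD] using hall x hx
    · exact Multiset.le_sup (by simp [List.getD])
  refine ⟨P, hPpos, ?_, ?_⟩
  · rw [← phiFun_zero_eq_sum P hPpos, hfun 0 (by omega), hsups]
  · rw [Phi, ← hl, Multiset.coe_eq_coe]
    apply List.Perm.of_eq
    apply List.ext_getElem
    · rw [phiList_length, hsup]
    · intro i h1 h2
      rw [← List.getD_eq_getElem (phiList P) 0 h1, ← List.getD_eq_getElem l 0 h2]
      rw [phiList_getD P (by rwa [phiList_length] at h1), hfun i h2]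

end SeqCongProof

open SeqCongProof in
theorem seqCong_largest_part_eq_partitions (n : ℕ) (hn : 1 ≤ n) :
    {s : Multiset ℕ | (∀ x ∈ s, 0 < x) ∧ IsSeqCong s ∧ s.sup = n}.ncard
      = Fintype.card (Nat.Partition n) := by
  have hinj : Function.Injective (fun p : Nat.Partition n => Phi p.parts) := by
    intro p q h
    exact Nat.Partition.ext (Phi_inj (fun x hx => p.parts_pos hx)
      (fun x hx => q.parts_pos hx) h)
  have hset : {s : Multiset ℕ | (∀ x ∈ s, 0 < x) ∧ IsSeqCong s ∧ s.sup = n}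
      = Set.range (fun p : Nat.Partition n => Phi p.parts) := by
    ext s
    constructor
    · rintro ⟨h1, h2, h3⟩
      have hs0 : s ≠ 0 := by
        rintro rfl
        simp at h3
        omega
      obtain ⟨P, hP1, hP2, hP3⟩ := exists_preimage s h1 h2 hs0
      exact ⟨⟨P, fun {x} hx => hP1 x hx, by rw [hP2, h3]⟩, hP3⟩
    · rintro ⟨p, rfl⟩
      have h0 : p.parts ≠ 0 := by
        intro h
        have := p.parts_sum
        rw [h, Multiset.sum_zero] at this
        omega
      obtain ⟨a, b, c⟩ := Phi_mem p.parts (fun x hx => p.parts_pos hx) h0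
      exact ⟨a, b, by rw [c, p.parts_sum]⟩
  rw [hset, ← Nat.card_coe_set_eq, Nat.card_range_of_injective hinj,
    Nat.card_eq_fintype_card]
end

section
/- The number of frequency congruent partitions with exactly n parts equals p(n), the number of partitions of n. -/
/-- Send a partition to the multiset where part `i` occurs `i * (mult of i)` times. -/
def toMS {n : ℕ} (p : Nat.Partition n) : Multiset ℕ :=
  p.parts.bind fun i => Multiset.replicate i i

lemma sum_map_ite (s : Multiset ℕ) (j : ℕ) :
    (s.map fun i => if i = j then i else 0).sum = j * s.count j := by
  induction s using Multiset.induction with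
  | empty => simp
  | cons a t ih =>
    simp only [Multiset.map_cons, Multiset.sum_cons, ih, Multiset.count_cons]
    by_cases h : a = j
    · subst h; simp [mul_add]; ring
    · simp [h, Ne.symm h]

lemma count_toMS {n : ℕ} (p : Nat.Partition n) (j : ℕ) :
    (toMS p).count j = j * p.parts.count j := by
  rw [toMS, Multiset.count_bind]
  rw [show (fun b => Multiset.count j (Multiset.replicate b b))
      = fun i => if i = j then i else 0 from funext fun b => by
        rw [Multiset.count_replicate]]
  exact sum_map_ite _ _

theorem freqCong_num_parts_eq_partitions (n : ℕ) (hn : 1 ≤ n) :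
    {s : Multiset ℕ | (∀ x ∈ s, 0 < x) ∧ IsFreqCong s ∧ Multiset.card s = n}.ncard
      = Fintype.card (Nat.Partition n) := by
  set S := {s : Multiset ℕ | (∀ x ∈ s, 0 < x) ∧ IsFreqCong s ∧ Multiset.card s = n} with hS
  -- the forward map
  have hmem : ∀ p : Nat.Partition n, toMS p ∈ S := by
    intro p
    refine ⟨?_, ?_, ?_⟩
    · intro x hx
      rw [toMS, Multiset.mem_bind] at hx
      obtain ⟨a, ha, hxa⟩ := hx
      rw [Multiset.eq_of_mem_replicate hxa]
      exact p.parts_pos ha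
    · intro i hi
      rw [count_toMS]
      exact Dvd.intro _ rfl
    · rw [toMS, Multiset.card_bind]
      have : (Multiset.map (Multiset.card ∘ fun i => Multiset.replicate i i) p.parts)
          = p.parts.map id := by
        apply Multiset.map_congr rfl
        intro x _; simp
      rw [this, Multiset.map_id]
      exact p.parts_sum
  let F : Nat.Partition n → S := fun p => ⟨toMS p, hmem p⟩
  have hinj : Function.Injective F := by
    intro p q h
    have h' : toMS p = toMS q := congrArg Subtype.val h
    have hc : ∀ j, p.parts.count j = q.parts.count j := by
      intro j
      rcases Nat.eq_zero_or_pos j with hj | hj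
      · subst hj
        rw [Multiset.count_eq_zero_of_notMem, Multiset.count_eq_zero_of_notMem]
        · exact fun hmem => lt_irrefl 0 (q.parts_pos hmem)
        · exact fun hmem => lt_irrefl 0 (p.parts_pos hmem)
      · have := congrArg (Multiset.count j) h'
        rw [count_toMS, count_toMS] at this
        exact Nat.eq_of_mul_eq_mul_left hj this
    have : p.parts = q.parts := Multiset.ext.mpr hc
    cases p; cases q; simpa using this
  have hsurj : Function.Surjective F := by
    rintro ⟨s, hpos, hfc, hcard⟩
    -- build the partition whose part `i` has multiplicity `s.count i / i`
    set t : Multiset ℕ := ∑ i ∈ s.toFinset, Multiset.replicate (s.count i / i) i with ht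
    have hcount : ∀ j, t.count j = s.count j / j := by
      intro j
      rw [ht, Multiset.count_sum']
      rw [Finset.sum_congr rfl (fun i _ => show Multiset.count j (Multiset.replicate (s.count i / i) i) = if i = j then s.count j / j else 0 by
            rw [Multiset.count_replicate]; by_cases h : i = j <;> simp [h])]
      rw [Finset.sum_ite_eq' s.toFinset j fun _ => s.count j / j]
      by_cases hj : j ∈ s.toFinset
      · simp [hj]
      · rw [if_neg hj]
        rw [Multiset.mem_toFinset] at hj
        rw [Multiset.count_eq_zero_of_notMem hj, Nat.zero_div]
    have htpos : ∀ j ∈ t, 0 < j := by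
      intro j hj
      have : t.count j ≠ 0 := Multiset.count_ne_zero.mpr hj
      rw [hcount] at this
      have hjs : j ∈ s := by
        by_contra hns
        rw [Multiset.count_eq_zero_of_notMem hns] at this
        simp at this
      exact hpos j hjs
    have htsum : t.sum = n := by
      rw [ht, Multiset.sum_sum]
      have : ∀ i ∈ s.toFinset, (Multiset.replicate (s.count i / i) i).sum = s.count i := by
        intro i hi
        rw [Multiset.sum_replicate, smul_eq_mul]
        exact Nat.div_mul_cancel (hfc i (hpos i (Multiset.mem_toFinset.mp hi)))
      rw [Finset.sum_congr rfl this, Multiset.toFinset_sum_count_eq, hcard]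
    refine ⟨⟨t, fun {i} hi => htpos i hi, htsum⟩, ?_⟩
    apply Subtype.ext
    show toMS _ = s
    ext j
    rw [count_toMS]
    show j * t.count j = _
    rw [hcount]
    rcases Nat.eq_zero_or_pos j with hj | hj
    · subst hj
      rw [zero_mul, eq_comm, Multiset.count_eq_zero_of_notMem]
      exact fun hm => lt_irrefl 0 (hpos 0 hm)
    · exact Nat.mul_div_cancel' (hfc j hj)
  have : Nat.card S = Nat.card (Nat.Partition n) :=
    Nat.card_congr (Equiv.ofBijective F ⟨hinj, hsurj⟩).symm
  rw [← Nat.card_coe_set_eq, this, Nat.card_eq_fintype_card]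
end

section
/- For every sequentially congruent partition λ = (λ₁ ≥ ... ≥ λ_r) of n, the size n can be written as a sum of perfect squares; concretely, n = Σ squares arising from the decomposition, so in particular every sequentially congruent partition has size expressible as a sum of at most λ₁ perfect squares. -/
-- helper: sum of map (· - b)
lemma map_sub_sum (b : ℕ) : ∀ m : List ℕ, (∀ x ∈ m, b ≤ x) →
    (m.map (· - b)).sum + m.length * b = m.sum := by
  intro m
  induction m with
  | nil => simp
  | cons a t ih =>
    intro h
    simp only [List.map_cons, List.sum_cons, List.length_cons]
    have ha : b ≤ a := h a (by simp)
    have h2 := ih (fun x hx => h x (by simp [hx]))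
    have h3 : (t.length + 1) * b = t.length * b + b := by ring
    omega

lemma sorted_getElem_le {l : List ℕ} (hs : l.Pairwise (· ≥ ·)) {i j : ℕ}
    (hij : i ≤ j) (hj : j < l.length) : l[j] ≤ l[i]'(lt_of_le_of_lt hij hj) := by
  rcases eq_or_lt_of_le hij with rfl | h
  · exact le_refl _
  · exact List.pairwise_iff_getElem.mp hs i j _ hj h

lemma mod_sub_mod {a a' b m : ℕ} (h : a % m = a' % m) (h1 : b ≤ a') (h2 : a' ≤ a) :
    (a - b) % m = (a' - b) % m := by
  have hdv : m ∣ a - a' := (Nat.modEq_iff_dvd' h2).mp h.symm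
  have h3 : m ∣ (a - b) - (a' - b) := by
    have h4 : a - b - (a' - b) = a - a' := by omega
    rw [h4]; exact hdv
  exact ((Nat.modEq_iff_dvd' (by omega)).mpr h3).symm

lemma mod_eq_dvd_sub {a b m : ℕ} (h : a % m = b % m) (hle : b ≤ a) : m ∣ a - b :=
  (Nat.modEq_iff_dvd' hle).mp h.symm

lemma key : ∀ (n : ℕ) (l : List ℕ), l.length ≤ n → l.Pairwise (· ≥ ·) → SeqCongList l →
    ∃ t : Multiset ℕ, (∀ x ∈ t, ∃ m : ℕ, 0 < m ∧ x = m * m) ∧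
      t.sum = l.sum ∧ Multiset.card t ≤ l.headD 0 := by
  intro n
  induction n with
  | zero =>
    intro l hl _ _
    have : l = [] := List.length_eq_zero_iff.mp (Nat.le_zero.mp hl)
    subst this
    exact ⟨0, by simp, by simp, by simp⟩
  | succ n ih =>
    intro l hl hs hc
    rcases eq_or_ne l [] with rfl | hne
    · exact ⟨0, by simp, by simp, by simp⟩
    set r := l.length with hr
    have hr1 : 1 ≤ r := List.length_pos_iff.mpr hne
    set b := l.getD (r-1) 0 with hb
    obtain ⟨d, hd⟩ : r ∣ b := hc.2 hne
    -- ordering facts in terms of getD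
    have hord : ∀ i j, i ≤ j → j < r → l.getD j 0 ≤ l.getD i 0 := by
      intro i j hij hj
      rw [List.getD_eq_getElem l 0 (show j < l.length from hj),
        List.getD_eq_getElem l 0 (show i < l.length by omega)]
      exact sorted_getElem_le hs hij hj
    have hgeb : ∀ i, i < r → b ≤ l.getD i 0 := fun i hi => hord i (r-1) (by omega) (by omega)
    -- the new list
    set l' : List ℕ := (l.dropLast).map (· - b) with hl'
    have hlen' : l'.length = r - 1 := by simp [hl']; omega
    have hget' : ∀ i, i < r - 1 → l'.getD i 0 = l.getD i 0 - b := by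
      intro i hi
      rw [List.getD_eq_getElem l' 0 (show i < l'.length by omega),
        List.getD_eq_getElem l 0 (show i < l.length by omega)]
      simp [hl', List.getElem_map, List.getElem_dropLast]
    have hs' : l'.Pairwise (· ≥ ·) := by
      apply List.pairwise_iff_getElem.mpr
      intro i j hi hj hij
      have h1 : l'[i] = l'.getD i 0 := (List.getD_eq_getElem l' 0 _).symm
      have h2 : l'[j] = l'.getD j 0 := (List.getD_eq_getElem l' 0 _).symm
      rw [h1, h2, hget' i (by omega), hget' j (by omega)]
      have := hord i j (le_of_lt hij) (by omega)
      omega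
    have hc' : SeqCongList l' := by
      constructor
      · intro i hi
        rw [hlen'] at hi
        rw [hget' i (by omega), hget' (i+1) (by omega)]
        exact mod_sub_mod (hc.1 i (by omega)) (hgeb (i+1) (by omega))
          (hord i (i+1) (by omega) (by omega))
      · intro hne'
        have hr2 : 2 ≤ r := by
          rcases Nat.lt_or_ge r 2 with h | h
          · exfalso; exact hne' (List.length_eq_zero_iff.mp (by omega))
          · exact h
        rw [hlen']
        have hidx : r - 1 - 1 = r - 2 := rfl
        rw [hidx, hget' (r-2) (by omega)]
        have hmod := hc.1 (r-2) (by omega)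
        have he : r - 2 + 1 = r - 1 := by omega
        rw [he] at hmod
        exact mod_eq_dvd_sub hmod (hgeb (r-2) (by omega))
    obtain ⟨t', ht'sq, ht'sum, ht'card⟩ := ih l' (by omega) hs' hc'
    refine ⟨Multiset.replicate d (r * r) + t', ?_, ?_, ?_⟩
    · intro x hx
      rcases Multiset.mem_add.mp hx with h | h
      · exact ⟨r, by omega, Multiset.eq_of_mem_replicate h⟩
      · exact ht'sq x h
    · -- sum
      have hmem : ∀ x ∈ l.dropLast, b ≤ x := by
        intro x hx
        obtain ⟨i, hi, rfl⟩ := List.mem_iff_getElem.mp hx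
        have hi' : i < r - 1 := by simpa using hi
        have : (l.dropLast)[i] = l.getD i 0 := by
          rw [List.getElem_dropLast, List.getD_eq_getElem l 0 (show i < l.length by omega)]
        rw [this]
        exact hgeb i (by omega)
      have hsum1 := map_sub_sum b l.dropLast hmem
      have hdl : l.dropLast.length = r - 1 := by simp; omega
      have hsuml : l.dropLast.sum + b = l.sum := by
        conv_rhs => rw [← List.dropLast_concat_getLast hne]
        rw [List.sum_append, List.getLast_eq_getElem, hb,
          List.getD_eq_getElem l 0 (show r - 1 < l.length by omega)]
        simp
        rfl
      have hsum2 : l'.sum + (r - 1) * b = l.dropLast.sum := by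
        rw [hl']; rw [hdl] at hsum1; exact hsum1
      rw [Multiset.sum_add, Multiset.sum_replicate, smul_eq_mul, ht'sum]
      have h1 : d * (r * r) = (r - 1) * b + b := by
        have he : r - 1 + 1 = r := by omega
        calc d * (r * r) = (r - 1 + 1) * b := by rw [he, hd]; ring
          _ = (r - 1) * b + b := by ring
      omega
    · -- card
      rw [Multiset.card_add, Multiset.card_replicate]
      have hd1 : d ≤ b := by
        rw [hd]; exact Nat.le_mul_of_pos_left d (by omega)
      have hhead : l.headD 0 = l.getD 0 0 := by
        cases l with
        | nil => exact absurd rfl hne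
        | cons a t => rfl
      rcases eq_or_lt_of_le hr1 with h1 | h2
      · -- r = 1
        have hl'nil : l' = [] := List.length_eq_zero_iff.mp (by omega)
        rw [hl'nil] at ht'card
        simp only [List.headD_nil] at ht'card
        have hcard0 : Multiset.card t' = 0 := Nat.le_zero.mp ht'card
        have hbeq : l.getD 0 0 = b := by rw [hb]; congr 1; omega
        rw [hhead, hbeq]
        omega
      · -- r ≥ 2
        have hhead' : l'.headD 0 = l'.getD 0 0 := by
          cases hl'e : l' with
          | nil => rw [hl'e] at hlen'; simp at hlen'; omega
          | cons a t => rfl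
        rw [hhead', hget' 0 (by omega)] at ht'card
        rw [hhead]
        have hb0 : b ≤ l.getD 0 0 := hgeb 0 (by omega)
        omega

/-- Every sequentially congruent partition has size expressible as a sum of
at most `λ₁` perfect squares (`λ₁ = s.sup` is the largest part). -/
theorem seqCong_sum_of_squares (s : Multiset ℕ) (hpos : ∀ x ∈ s, 0 < x)
    (hsc : IsSeqCong s) :
    ∃ t : Multiset ℕ, (∀ x ∈ t, ∃ m : ℕ, 0 < m ∧ x = m * m) ∧
      t.sum = s.sum ∧ Multiset.card t ≤ s.sup := by
  obtain ⟨l, hls, hsort, hcong⟩ := hsc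
  obtain ⟨t, htsq, htsum, htcard⟩ := key l.length l le_rfl hsort hcong
  refine ⟨t, htsq, ?_, ?_⟩
  · rw [htsum, ← hls, Multiset.sum_coe]
  · refine le_trans htcard ?_
    cases l with
    | nil => exact Nat.zero_le _
    | cons a rest =>
      have ha : a ∈ s := by rw [← hls]; simp
      simpa using Multiset.le_sup ha
end

section
/- The map sending a partition μ, in which each part i that occurs does so with multiplicity exactly j·i^k, to the partition in which i^{k+1} occurs with multiplicity j for each part i of μ, is a size-preserving bijection onto the set of partitions into (k+1)-th powers where each occurring part appears exactly j times. -/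
/-- Domain: partitions `μ` in which each occurring part `i` occurs with
multiplicity exactly `j·i^k`. -/
def IsJKFreq (j k : ℕ) (s : Multiset ℕ) : Prop :=
  (∀ x ∈ s, 0 < x) ∧ ∀ i : ℕ, 0 < i → i ∈ s → s.count i = j * i ^ k

/-- Codomain: partitions into `(k+1)`-th powers of positive integers in which
each occurring part occurs exactly `j` times. -/
def IsPowPartJ (j k : ℕ) (s : Multiset ℕ) : Prop :=
  (∀ x ∈ s, ∃ m : ℕ, 0 < m ∧ x = m ^ (k + 1)) ∧ ∀ x ∈ s, s.count x = j

/-- The map replacing the `j·i^k` copies of each part `i` by `j` copies of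
`i^{k+1}`. -/
def powMap (j k : ℕ) (s : Multiset ℕ) : Multiset ℕ :=
  ∑ i ∈ s.toFinset, Multiset.replicate j (i ^ (k + 1))

open Classical in
noncomputable def powRoot (k x : ℕ) : ℕ :=
  if h : ∃ m : ℕ, 0 < m ∧ x = m ^ (k + 1) then h.choose else 0

lemma powRoot_spec {k x : ℕ} (h : ∃ m : ℕ, 0 < m ∧ x = m ^ (k + 1)) :
    0 < powRoot k x ∧ x = powRoot k x ^ (k + 1) := by
  rw [powRoot, dif_pos h]
  exact h.choose_spec

lemma pow_inj (k : ℕ) : Function.Injective (fun m : ℕ => m ^ (k + 1)) :=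
  Nat.pow_left_injective (Nat.succ_ne_zero k)

lemma count_powMap (j k : ℕ) (s : Multiset ℕ) (m : ℕ) :
    (powMap j k s).count (m ^ (k + 1)) = if m ∈ s.toFinset then j else 0 := by
  rw [powMap, Multiset.count_sum']
  have : ∀ i ∈ s.toFinset,
      (Multiset.replicate j (i ^ (k + 1))).count (m ^ (k + 1)) =
        if i = m then j else 0 := by
    intro i _
    rw [Multiset.count_replicate]
    by_cases h : i = m
    · simp [h]
    · rw [if_neg h, if_neg (fun hc => h (pow_inj k hc))]
  rw [Finset.sum_congr rfl this, Finset.sum_ite_eq' s.toFinset m (fun _ => j)]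

lemma mem_powMap {j k : ℕ} (hj : 0 < j) {s : Multiset ℕ} {x : ℕ} :
    x ∈ powMap j k s ↔ ∃ i ∈ s, x = i ^ (k + 1) := by
  rw [powMap, Multiset.mem_sum]
  constructor
  · rintro ⟨i, hi, hx⟩
    exact ⟨i, Multiset.mem_toFinset.mp hi, Multiset.eq_of_mem_replicate hx⟩
  · rintro ⟨i, hi, rfl⟩
    exact ⟨i, Multiset.mem_toFinset.mpr hi,
      Multiset.mem_replicate.mpr ⟨hj.ne', rfl⟩⟩

theorem powMap_bijOn_size_preserving (j k : ℕ) (hj : 0 < j) (hk : 0 < k) :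
    Set.BijOn (powMap j k)
        {s : Multiset ℕ | IsJKFreq j k s} {t : Multiset ℕ | IsPowPartJ j k t}
      ∧ ∀ s : Multiset ℕ, IsJKFreq j k s → (powMap j k s).sum = s.sum := by
  constructor
  · refine ⟨?_, ?_, ?_⟩
    · -- MapsTo
      intro s hs
      constructor
      · intro x hx
        obtain ⟨i, hi, rfl⟩ := (mem_powMap hj).mp hx
        exact ⟨i, hs.1 i hi, rfl⟩
      · intro x hx
        obtain ⟨i, hi, rfl⟩ := (mem_powMap hj).mp hx
        rw [count_powMap, if_pos (Multiset.mem_toFinset.mpr hi)]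
    · -- InjOn
      intro s hs s' hs' heq
      have htf : s.toFinset = s'.toFinset := by
        ext i
        simp only [Multiset.mem_toFinset]
        constructor
        · intro hi
          have : (i : ℕ) ^ (k + 1) ∈ powMap j k s' := by
            rw [← heq]; exact (mem_powMap hj).mpr ⟨i, hi, rfl⟩
          obtain ⟨i', hi', he⟩ := (mem_powMap hj).mp this
          rwa [pow_inj k he]
        · intro hi
          have : (i : ℕ) ^ (k + 1) ∈ powMap j k s := by
            rw [heq]; exact (mem_powMap hj).mpr ⟨i, hi, rfl⟩
          obtain ⟨i', hi', he⟩ := (mem_powMap hj).mp this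
          rwa [pow_inj k he]
      ext i
      by_cases hi : i ∈ s
      · have hi' : i ∈ s' := by
          rw [← Multiset.mem_toFinset, ← htf, Multiset.mem_toFinset]; exact hi
        rw [hs.2 i (hs.1 i hi) hi, hs'.2 i (hs'.1 i hi') hi']
      · have hi' : i ∉ s' := by
          rw [← Multiset.mem_toFinset, ← htf, Multiset.mem_toFinset]; exact hi
        rw [Multiset.count_eq_zero_of_notMem hi,
          Multiset.count_eq_zero_of_notMem hi']
    · -- SurjOn
      intro t ht
      set r := powRoot k with hr
      have hspec : ∀ x ∈ t, 0 < r x ∧ x = r x ^ (k + 1) := fun x hx =>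
        powRoot_spec (ht.1 x hx)
      set s : Multiset ℕ :=
        ∑ x ∈ t.toFinset, Multiset.replicate (j * r x ^ k) (r x) with hsdef
      have hpos : ∀ x ∈ t.toFinset, 0 < j * r x ^ k := fun x hx =>
        Nat.mul_pos hj (Nat.pow_pos
          (hspec x (Multiset.mem_toFinset.mp hx)).1)
      have hrinj : ∀ x ∈ t.toFinset, ∀ y ∈ t.toFinset, r x = r y → x = y := by
        intro x hx y hy hxy
        rw [(hspec x (Multiset.mem_toFinset.mp hx)).2,
          (hspec y (Multiset.mem_toFinset.mp hy)).2, hxy]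
      have hmem : ∀ i : ℕ, i ∈ s ↔ ∃ x ∈ t.toFinset, r x = i := by
        intro i
        rw [hsdef, Multiset.mem_sum]
        constructor
        · rintro ⟨x, hx, hi⟩
          exact ⟨x, hx, (Multiset.eq_of_mem_replicate hi).symm⟩
        · rintro ⟨x, hx, rfl⟩
          exact ⟨x, hx, Multiset.mem_replicate.mpr ⟨(hpos x hx).ne', rfl⟩⟩
      have hcount : ∀ x ∈ t.toFinset, s.count (r x) = j * r x ^ k := by
        intro x hx
        rw [hsdef, Multiset.count_sum']
        rw [Finset.sum_eq_single x]
        · rw [Multiset.count_replicate, if_pos rfl]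
        · intro y hy hyx
          rw [Multiset.count_replicate,
            if_neg (fun hc => hyx (hrinj y hy x hx hc))]
        · intro hx'; exact absurd hx hx'
      refine ⟨s, ?_, ?_⟩
      · constructor
        · intro i hi
          obtain ⟨x, hx, rfl⟩ := (hmem i).mp hi
          exact (hspec x (Multiset.mem_toFinset.mp hx)).1
        · intro i _ hi
          obtain ⟨x, hx, rfl⟩ := (hmem i).mp hi
          exact hcount x hx
      · -- powMap j k s = t
        have hstf : s.toFinset = t.toFinset.image r := by
          ext i
          rw [Multiset.mem_toFinset, hmem, Finset.mem_image]
        rw [powMap, hstf, Finset.sum_image hrinj]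
        have : ∀ x ∈ t.toFinset,
            Multiset.replicate j (r x ^ (k + 1)) = Multiset.replicate j x := by
          intro x hx
          rw [← (hspec x (Multiset.mem_toFinset.mp hx)).2]
        rw [Finset.sum_congr rfl this]
        conv_rhs => rw [← Multiset.toFinset_sum_count_nsmul_eq t]
        refine Finset.sum_congr rfl fun x hx => ?_
        rw [ht.2 x (Multiset.mem_toFinset.mp hx), Multiset.nsmul_singleton]
  · -- size preserving
    intro s hs
    rw [powMap]
    conv_rhs => rw [← Multiset.toFinset_sum_count_nsmul_eq s]
    rw [Multiset.sum_sum, Multiset.sum_sum]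
    refine Finset.sum_congr rfl fun i hi => ?_
    have hip : 0 < i := hs.1 i (Multiset.mem_toFinset.mp hi)
    rw [Multiset.sum_replicate, Multiset.nsmul_singleton, Multiset.sum_replicate,
      hs.2 i hip (Multiset.mem_toFinset.mp hi), smul_eq_mul, smul_eq_mul,
      pow_succ, ← mul_assoc]
end

section
/- For every n ≥ 1, the number of partitions of n whose parts all occur with multiplicity divisible by their size (frequency congruent partitions) equals the number of sequentially congruent partitions of n, and both equal the number of partitions of n into perfect squares. -/
namespace FSQ


lemma sum_getD (l : List ℕ) : ∑ i ∈ Finset.range l.length, l.getD i 0 = l.sum := by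
  induction l with
  | nil => simp
  | cons a t ih =>
    rw [List.length_cons, Finset.sum_range_succ']
    simp only [List.getD_cons_succ, List.getD_cons_zero, List.sum_cons, ih]
    omega

lemma abel_sum (f : ℕ → ℕ) (hf : ∀ i, f (i+1) ≤ f i) (r : ℕ) :
    ∑ i ∈ Finset.range r, (f i - f (i+1)) * (i+1)
      = (∑ i ∈ Finset.range r, f i) - r * f r := by
  have hanti : ∀ i j, i ≤ j → f j ≤ f i := fun i j h => by
    induction h with
    | refl => exact le_rfl
    | @step k h ih2 => exact le_trans (hf k) ih2
  induction r with
  | zero => simp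
  | succ r ih =>
    have hS : r * f r ≤ ∑ i ∈ Finset.range r, f i := by
      calc r * f r = ∑ _i ∈ Finset.range r, f r := by
            rw [Finset.sum_const, smul_eq_mul, Finset.card_range]
      _ ≤ _ := Finset.sum_le_sum (fun i hi => hanti i r (le_of_lt (Finset.mem_range.mp hi)))
    rw [Finset.sum_range_succ, Finset.sum_range_succ, ih]
    have h1 : (f r - f (r+1)) * (r+1) = (f r * (r+1)) - (f (r+1) * (r+1)) := by
      rw [Nat.sub_mul]
    have h2 : f r * (r+1) = r * f r + f r := by ring
    have h3 : f (r+1) * (r+1) = (r+1) * f (r+1) := by ring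
    have h4 : f (r+1) ≤ f r := hf r
    have h5 : (r+1) * f (r+1) ≤ f r * (r+1) := by
      rw [mul_comm]; exact Nat.mul_le_mul_right _ h4
    omega

lemma tele (f : ℕ → ℕ) (hf : ∀ i j, i ≤ j → f j ≤ f i) (i : ℕ) :
    ∀ r, i ≤ r → ∑ j ∈ Finset.Icc (i+1) r, (f (j-1) - f j) = f i - f r := by
  intro r
  induction r with
  | zero => intro h; interval_cases i; simp
  | succ r ih =>
    intro h
    rcases Nat.lt_or_ge i (r+1) with h' | h'
    · have hir : i ≤ r := by omega
      rw [Finset.sum_Icc_succ_top (by omega), ih hir]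
      have := hf i r hir
      have := hf r (r+1) (by omega)
      simp only [Nat.add_sub_cancel]
      omega
    · have : i = r + 1 := by omega
      subst this
      simp

lemma swap_sum (F : ℕ → ℕ) (r : ℕ) :
    ∑ i ∈ Finset.range r, ∑ j ∈ Finset.Icc (i+1) r, F j
      = ∑ j ∈ Finset.Icc 1 r, j * F j := by
  induction r with
  | zero => simp
  | succ r ih =>
    have step1 : ∀ i ∈ Finset.range (r+1),
        ∑ j ∈ Finset.Icc (i+1) (r+1), F j = ∑ j ∈ Finset.Icc (i+1) r, F j + F (r+1) := by
      intro i hi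
      rw [Finset.sum_Icc_succ_top (by simp at hi; omega)]
    rw [Finset.sum_congr rfl step1, Finset.sum_add_distrib, Finset.sum_const,
      Finset.sum_range_succ]
    have : Finset.Icc (r+1) r = ∅ := by rw [Finset.Icc_eq_empty]; omega
    rw [this, Finset.sum_empty, add_zero, ih, Finset.sum_Icc_succ_top (by omega)]
    simp [mul_comm]

lemma Icc_insert {a b : ℕ} (h : a ≤ b) :
    Finset.Icc a b = insert a (Finset.Icc (a+1) b) := by
  ext x; simp [Finset.mem_Icc, Finset.mem_insert]; omega

lemma sum_Icc_bot {a b : ℕ} (h : a ≤ b) (f : ℕ → ℕ) :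
    ∑ j ∈ Finset.Icc a b, f j = f a + ∑ j ∈ Finset.Icc (a+1) b, f j := by
  rw [Icc_insert h, Finset.sum_insert (by simp [Finset.mem_Icc])]

lemma multiset_sum_eq (s : Multiset ℕ) :
    s.sum = ∑ i ∈ s.toFinset, s.count i * i := by
  conv_lhs => rw [← Multiset.toFinset_sum_count_nsmul_eq s]
  rw [Multiset.sum_sum]
  simp [Multiset.sum_nsmul]

/-! ### freqOfList -/

def freqOfList (l : List ℕ) : Multiset ℕ :=
  ∑ i ∈ Finset.range l.length, Multiset.replicate (l.getD i 0 - l.getD (i+1) 0) (i+1)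

lemma count_freqOfList_zero (l : List ℕ) : (freqOfList l).count 0 = 0 := by
  rw [freqOfList, Multiset.count_sum']
  refine Finset.sum_eq_zero fun i _ => ?_
  rw [Multiset.count_replicate, if_neg (by omega)]

lemma count_freqOfList (l : List ℕ) (m : ℕ) :
    (freqOfList l).count (m+1)
      = if m < l.length then l.getD m 0 - l.getD (m+1) 0 else 0 := by
  rw [freqOfList, Multiset.count_sum']
  have : ∀ i ∈ Finset.range l.length,
      (Multiset.replicate (l.getD i 0 - l.getD (i+1) 0) (i+1)).count (m+1)
        = if i = m then l.getD i 0 - l.getD (i+1) 0 else 0 := by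
    intro i _
    rw [Multiset.count_replicate]
    congr 1
    simp [eq_comm]
  rw [Finset.sum_congr rfl this, Finset.sum_ite_eq' (Finset.range l.length)]
  simp

lemma getD_anti (l : List ℕ) (hl : l.Pairwise (· ≥ ·)) :
    ∀ i j, i ≤ j → l.getD j 0 ≤ l.getD i 0 := by
  intro i j hij
  rcases Nat.lt_or_ge j l.length with hj | hj
  · have hi : i < l.length := lt_of_le_of_lt hij hj
    rw [List.getD_eq_getElem _ _ hj, List.getD_eq_getElem _ _ hi]
    rcases eq_or_lt_of_le hij with rfl | h
    · exact le_rfl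
    · exact (List.pairwise_iff_getElem.mp hl) i j hi hj h
  · rw [List.getD_eq_default _ _ hj]; exact Nat.zero_le _

lemma mem_freqOfList_pos (l : List ℕ) : ∀ x ∈ freqOfList l, 0 < x := by
  intro x hx
  rcases Nat.eq_zero_or_pos x with rfl | h
  · exact absurd (Multiset.count_pos.mpr hx) (by rw [count_freqOfList_zero]; omega)
  · exact h

lemma sum_freqOfList (l : List ℕ) (hl : l.Pairwise (· ≥ ·)) :
    (freqOfList l).sum = l.sum := by
  rw [freqOfList, Multiset.sum_sum]
  have : ∀ i ∈ Finset.range l.length,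
      (Multiset.replicate (l.getD i 0 - l.getD (i+1) 0) (i+1)).sum
        = (l.getD i 0 - l.getD (i+1) 0) * (i+1) := by
    intro i _; rw [Multiset.sum_replicate, smul_eq_mul]
  rw [Finset.sum_congr rfl this, abel_sum _ (fun i => getD_anti l hl i (i+1) (by omega)),
    List.getD_eq_default _ _ le_rfl, Nat.mul_zero, Nat.sub_zero, sum_getD]


/-- the defining property from the main statement, restated -/
lemma freqCong_freqOfList (l : List ℕ) (hl : l.Pairwise (· ≥ ·))
    (h1 : ∀ i, i + 1 < l.length → l.getD i 0 % (i + 1) = l.getD (i + 1) 0 % (i + 1))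
    (h2 : l ≠ [] → l.length ∣ l.getD (l.length - 1) 0) :
    ∀ i : ℕ, 0 < i → i ∣ (freqOfList l).count i := by
  intro i hi
  obtain ⟨m, rfl⟩ : ∃ m, i = m + 1 := ⟨i - 1, by omega⟩
  rw [count_freqOfList]
  split_ifs with hm
  · rcases Nat.lt_or_ge (m+1) l.length with hlt | hge
    · exact Nat.dvd_of_mod_eq_zero (Nat.sub_mod_eq_zero_of_mod_eq (h1 m hlt))
    · have hlen : l.length = m + 1 := by omega
      have hne : l ≠ [] := by intro h; rw [h] at hlen; simp at hlen
      have := h2 hne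
      rw [hlen] at this
      simp only [Nat.add_sub_cancel] at this
      rw [show l.getD (m+1) 0 = 0 from List.getD_eq_default _ _ (by omega), Nat.sub_zero]
      exact this
  · exact Dvd.intro 0 rfl

/-! ### seqOf -/

def rOf (s : Multiset ℕ) : ℕ := s.toFinset.sup id

def seqOf (s : Multiset ℕ) : List ℕ :=
  (List.range (rOf s)).map fun i => ∑ j ∈ Finset.Icc (i+1) (rOf s), s.count j

lemma le_rOf {s : Multiset ℕ} {x : ℕ} (hx : x ∈ s) : x ≤ rOf s :=
  Finset.le_sup (f := id) (Multiset.mem_toFinset.mpr hx)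

lemma rOf_mem {s : Multiset ℕ} (hs : s ≠ 0) : rOf s ∈ s := by
  obtain ⟨x, hx, hsup⟩ := Finset.exists_mem_eq_sup s.toFinset
    (by simpa [Multiset.toFinset_nonempty] using hs) id
  rw [rOf, hsup]
  exact Multiset.mem_toFinset.mp hx

lemma length_seqOf (s : Multiset ℕ) : (seqOf s).length = rOf s := by simp [seqOf]

lemma getD_seqOf (s : Multiset ℕ) (i : ℕ) :
    (seqOf s).getD i 0 = ∑ j ∈ Finset.Icc (i+1) (rOf s), s.count j := by
  rcases Nat.lt_or_ge i (rOf s) with h | h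
  · rw [List.getD_eq_getElem _ _ (by simpa [length_seqOf])]
    simp [seqOf]
  · rw [List.getD_eq_default _ _ (by simpa [length_seqOf]),
      Finset.Icc_eq_empty (by omega), Finset.sum_empty]

lemma sorted_seqOf (s : Multiset ℕ) : (seqOf s).Pairwise (· ≥ ·) := by
  rw [List.pairwise_iff_getElem]
  intro i j hi hj hij
  have hi' : i < rOf s := by simpa [length_seqOf] using hi
  have hj' : j < rOf s := by simpa [length_seqOf] using hj
  simp only [seqOf, List.getElem_map, List.getElem_range]
  exact Finset.sum_le_sum_of_subset (Finset.Icc_subset_Icc (by omega) le_rfl)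

lemma pos_seqOf (s : Multiset ℕ) (hs : s ≠ 0) : ∀ x ∈ seqOf s, 0 < x := by
  intro x hx
  obtain ⟨i, hi, rfl⟩ := List.mem_iff_getElem.mp hx
  have hi' : i < rOf s := by simpa [length_seqOf] using hi
  simp only [seqOf, List.getElem_map, List.getElem_range]
  have hr : rOf s ∈ Finset.Icc (i+1) (rOf s) := by simp [Finset.mem_Icc]; omega
  have hcount : 0 < s.count (rOf s) := Multiset.count_pos.mpr (rOf_mem hs)
  calc 0 < s.count (rOf s) := hcount
  _ ≤ _ := Finset.single_le_sum (f := fun j => s.count j) (fun j _ => Nat.zero_le _) hr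



lemma sum_seqOf (s : Multiset ℕ) (hpos : ∀ x ∈ s, 0 < x) :
    (seqOf s).sum = s.sum := by
  rw [← sum_getD, length_seqOf]
  rw [Finset.sum_congr rfl (fun i _ => getD_seqOf s i), swap_sum]
  rw [multiset_sum_eq]
  have hsub : s.toFinset ⊆ Finset.Icc 1 (rOf s) := by
    intro x hx
    have hx' := Multiset.mem_toFinset.mp hx
    simp only [Finset.mem_Icc]
    exact ⟨hpos x hx', le_rOf hx'⟩
  have hzero : ∀ x ∈ Finset.Icc 1 (rOf s), x ∉ s.toFinset → x * s.count x = 0 := by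
    intro x _ hx
    rw [Multiset.count_eq_zero.mpr (fun h => hx (Multiset.mem_toFinset.mpr h)), Nat.mul_zero]
  rw [← Finset.sum_subset hsub hzero]
  exact Finset.sum_congr rfl fun i _ => Nat.mul_comm _ _

lemma getD_seqOf_succ (s : Multiset ℕ) (i : ℕ) (h : i < rOf s) :
    (seqOf s).getD i 0 = s.count (i+1) + (seqOf s).getD (i+1) 0 := by
  rw [getD_seqOf, getD_seqOf, sum_Icc_bot (by omega)]

lemma seqCong_seqOf (s : Multiset ℕ) (hs : s ≠ 0) (hpos : ∀ x ∈ s, 0 < x)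
    (hfc : ∀ i : ℕ, 0 < i → i ∣ s.count i) :
    (∀ i, i + 1 < (seqOf s).length →
        (seqOf s).getD i 0 % (i + 1) = (seqOf s).getD (i + 1) 0 % (i + 1)) ∧
    (seqOf s ≠ [] → (seqOf s).length ∣ (seqOf s).getD ((seqOf s).length - 1) 0) := by
  constructor
  · intro i hi
    rw [length_seqOf] at hi
    rw [getD_seqOf_succ s i (by omega)]
    obtain ⟨c, hc⟩ := hfc (i+1) (by omega)
    rw [hc, Nat.mul_add_mod]
  · intro _
    have hr : 0 < rOf s := by
      obtain ⟨x, hx⟩ := Multiset.exists_mem_of_ne_zero hs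
      exact lt_of_lt_of_le (hpos x hx) (le_rOf hx)
    rw [length_seqOf, getD_seqOf]
    have : Finset.Icc (rOf s - 1 + 1) (rOf s) = {rOf s} := by
      rw [show rOf s - 1 + 1 = rOf s by omega, Finset.Icc_self]
    rw [this, Finset.sum_singleton]
    exact hfc _ hr



lemma freqOfList_seqOf (s : Multiset ℕ) (hpos : ∀ x ∈ s, 0 < x) :
    freqOfList (seqOf s) = s := by
  ext k
  rcases k with _ | m
  · rw [count_freqOfList_zero]
    exact (Multiset.count_eq_zero.mpr (fun h => (Nat.lt_irrefl 0 (hpos 0 h)))).symm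
  · rw [count_freqOfList, length_seqOf]
    split_ifs with hm
    · rw [getD_seqOf_succ s m hm]
      omega
    · refine (Multiset.count_eq_zero.mpr (fun h => ?_)).symm
      exact hm (by have := le_rOf h; omega)

lemma seqOf_freqOfList (l : List ℕ) (hl : l.Pairwise (· ≥ ·))
    (hpos : ∀ x ∈ l, 0 < x) (hne : l ≠ []) :
    seqOf (freqOfList l) = l := by
  set s := freqOfList l with hs
  have hlenpos : 0 < l.length := List.length_pos_iff.mpr hne
  have hmem : l.length ∈ s := by
    rw [← Multiset.count_pos, hs]
    obtain ⟨m, hm⟩ : ∃ m, l.length = m + 1 := ⟨l.length - 1, by omega⟩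
    rw [hm, count_freqOfList, if_pos (by omega),
      show l.getD (m+1) 0 = 0 from List.getD_eq_default _ _ (by omega), Nat.sub_zero,
      List.getD_eq_getElem _ _ (by omega)]
    exact hpos _ (List.getElem_mem _)
  have hle : rOf s ≤ l.length := by
    refine Finset.sup_le fun x hx => ?_
    have hxs := Multiset.mem_toFinset.mp hx
    have hx0 : 0 < x := mem_freqOfList_pos l x hxs
    obtain ⟨m, rfl⟩ : ∃ m, x = m + 1 := ⟨x - 1, by omega⟩
    show m + 1 ≤ l.length
    have hc := Multiset.count_pos.mpr hxs
    rw [hs, count_freqOfList] at hc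
    by_contra h
    rw [if_neg (by omega)] at hc
    omega
  have hr : rOf s = l.length := le_antisymm hle (le_rOf hmem)
  apply List.ext_getElem
  · rw [length_seqOf, hr]
  · intro i hi hi'
    have hi2 : i < rOf s := by rw [length_seqOf] at hi; exact hi
    simp only [seqOf, List.getElem_map, List.getElem_range]
    have hcount : ∀ j ∈ Finset.Icc (i+1) (rOf s),
        s.count j = l.getD (j-1) 0 - l.getD j 0 := by
      intro j hj
      simp only [Finset.mem_Icc] at hj
      obtain ⟨m, rfl⟩ : ∃ m, j = m + 1 := ⟨j - 1, by omega⟩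
      rw [hs, count_freqOfList, if_pos (by omega)]
      simp
    rw [Finset.sum_congr rfl hcount, hr,
      tele (fun t => l.getD t 0) (getD_anti l hl) i l.length (by omega),
      show l.getD l.length 0 = 0 from List.getD_eq_default _ _ le_rfl, Nat.sub_zero,
      List.getD_eq_getElem _ _ hi']



def sqOf (s : Multiset ℕ) : Multiset ℕ :=
  ∑ i ∈ s.toFinset, Multiset.replicate (s.count i / i) (i*i)

def frOf (t : Multiset ℕ) : Multiset ℕ :=
  ∑ x ∈ t.toFinset, Multiset.replicate (Nat.sqrt x * t.count x) (Nat.sqrt x)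

lemma mem_sqOf {s : Multiset ℕ} (hpos : ∀ x ∈ s, 0 < x) :
    ∀ y ∈ sqOf s, ∃ m : ℕ, 0 < m ∧ y = m * m := by
  intro y hy
  obtain ⟨i, hi, hyi⟩ := Multiset.mem_sum.mp hy
  exact ⟨i, hpos i (Multiset.mem_toFinset.mp hi), Multiset.eq_of_mem_replicate hyi⟩

lemma count_sqOf (s : Multiset ℕ) (k : ℕ) :
    (sqOf s).count k = ∑ i ∈ s.toFinset, if i * i = k then s.count i / i else 0 := by
  rw [sqOf, Multiset.count_sum']
  exact Finset.sum_congr rfl fun i _ => Multiset.count_replicate _ _ _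

lemma count_sqOf_sq (s : Multiset ℕ) (j : ℕ) (hj : 0 < j) :
    (sqOf s).count (j*j) = s.count j / j := by
  rw [count_sqOf]
  have : ∀ i ∈ s.toFinset, (if i * i = j * j then s.count i / i else 0)
      = if i = j then s.count i / i else 0 := by
    intro i _
    congr 1
    simp [Nat.mul_self_inj]
  rw [Finset.sum_congr rfl this, Finset.sum_ite_eq' s.toFinset]
  split_ifs with h
  · rfl
  · rw [Multiset.count_eq_zero.mpr (fun hm => h (Multiset.mem_toFinset.mpr hm)), Nat.zero_div]

lemma sum_sqOf (s : Multiset ℕ) (hpos : ∀ x ∈ s, 0 < x)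
    (hfc : ∀ i : ℕ, 0 < i → i ∣ s.count i) : (sqOf s).sum = s.sum := by
  rw [sqOf, Multiset.sum_sum, multiset_sum_eq]
  refine Finset.sum_congr rfl fun i hi => ?_
  have hi' : 0 < i := hpos i (Multiset.mem_toFinset.mp hi)
  rw [Multiset.sum_replicate, smul_eq_mul, ← Nat.mul_assoc,
    Nat.div_mul_cancel (hfc i hi')]

lemma count_frOf (t : Multiset ℕ) (k : ℕ) :
    (frOf t).count k = ∑ x ∈ t.toFinset, if Nat.sqrt x = k then Nat.sqrt x * t.count x else 0 := by
  rw [frOf, Multiset.count_sum']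
  exact Finset.sum_congr rfl fun x _ => Multiset.count_replicate _ _ _

lemma count_frOf_zero (t : Multiset ℕ) : (frOf t).count 0 = 0 := by
  rw [count_frOf]
  refine Finset.sum_eq_zero fun x _ => ?_
  split_ifs with h
  · rw [h, Nat.zero_mul]
  · rfl

lemma count_frOf_pos (t : Multiset ℕ) (hsq : ∀ x ∈ t, ∃ m : ℕ, 0 < m ∧ x = m * m)
    (k : ℕ) (hk : 0 < k) : (frOf t).count k = k * t.count (k*k) := by
  rw [count_frOf]
  have : ∀ x ∈ t.toFinset, (if Nat.sqrt x = k then Nat.sqrt x * t.count x else 0)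
      = if x = k * k then k * t.count (k*k) else 0 := by
    intro x hx
    obtain ⟨m, hm, rfl⟩ := hsq x (Multiset.mem_toFinset.mp hx)
    rw [Nat.sqrt_eq]
    by_cases h : m = k
    · subst h; rw [if_pos rfl, if_pos rfl]
    · rw [if_neg h, if_neg (fun hh => h (Nat.mul_self_inj.mp hh))]
  rw [Finset.sum_congr rfl this, Finset.sum_ite_eq' t.toFinset]
  split_ifs with h
  · rfl
  · rw [Multiset.count_eq_zero.mpr (fun hm => h (Multiset.mem_toFinset.mpr hm)), Nat.mul_zero]

lemma pos_frOf (t : Multiset ℕ) : ∀ x ∈ frOf t, 0 < x := by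
  intro x hx
  rcases Nat.eq_zero_or_pos x with rfl | h
  · exact absurd (Multiset.count_pos.mpr hx) (by rw [count_frOf_zero]; omega)
  · exact h

lemma sum_frOf (t : Multiset ℕ) (hsq : ∀ x ∈ t, ∃ m : ℕ, 0 < m ∧ x = m * m) :
    (frOf t).sum = t.sum := by
  rw [frOf, Multiset.sum_sum, multiset_sum_eq]
  refine Finset.sum_congr rfl fun x hx => ?_
  obtain ⟨m, hm, rfl⟩ := hsq x (Multiset.mem_toFinset.mp hx)
  rw [Multiset.sum_replicate, smul_eq_mul, Nat.sqrt_eq]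
  ring

lemma frOf_sqOf (s : Multiset ℕ) (hpos : ∀ x ∈ s, 0 < x)
    (hfc : ∀ i : ℕ, 0 < i → i ∣ s.count i) : frOf (sqOf s) = s := by
  ext k
  rcases Nat.eq_zero_or_pos k with rfl | hk
  · rw [count_frOf_zero]
    exact (Multiset.count_eq_zero.mpr (fun h => (Nat.lt_irrefl 0 (hpos 0 h)))).symm
  · rw [count_frOf_pos _ (mem_sqOf hpos) k hk, count_sqOf_sq s k hk,
      Nat.mul_div_cancel' (hfc k hk)]

lemma sqOf_frOf (t : Multiset ℕ) (hsq : ∀ x ∈ t, ∃ m : ℕ, 0 < m ∧ x = m * m) :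
    sqOf (frOf t) = t := by
  ext k
  rw [count_sqOf]
  have hterm : ∀ i ∈ (frOf t).toFinset,
      (if i * i = k then (frOf t).count i / i else 0) = if i * i = k then t.count k else 0 := by
    intro i hi
    have hi' : 0 < i := pos_frOf t i (Multiset.mem_toFinset.mp hi)
    by_cases h : i * i = k
    · rw [if_pos h, if_pos h, count_frOf_pos t hsq i hi', Nat.mul_div_cancel_left _ hi', h]
    · rw [if_neg h, if_neg h]
  rw [Finset.sum_congr rfl hterm]
  by_cases hkt : k ∈ t
  · obtain ⟨m, hm, rfl⟩ := hsq k hkt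
    have hmem : m ∈ (frOf t).toFinset := by
      rw [Multiset.mem_toFinset, ← Multiset.count_pos, count_frOf_pos t hsq m hm]
      exact Nat.mul_pos hm (Multiset.count_pos.mpr hkt)
    have : ∀ i ∈ (frOf t).toFinset,
        (if i * i = m * m then t.count (m*m) else 0) = if i = m then t.count (m*m) else 0 := by
      intro i _
      congr 1
      simp [Nat.mul_self_inj]
    rw [Finset.sum_congr rfl this, Finset.sum_ite_eq' _, if_pos hmem]
  · rw [Multiset.count_eq_zero.mpr hkt]
    exact Finset.sum_eq_zero fun i _ => by split_ifs <;> rfl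




noncomputable def equivSeqFreq (n : ℕ) (hn : 1 ≤ n) :
    {p : n.Partition // IsSeqCong p.parts} ≃ {p : n.Partition // IsFreqCong p.parts} where
  toFun := fun ⟨p, hp⟩ => by
    refine ⟨⟨freqOfList (Multiset.sort p.parts (· ≥ ·)), ?_, ?_⟩, ?_⟩
    · exact fun h => mem_freqOfList_pos _ _ h
    · rw [sum_freqOfList _ (Multiset.pairwise_sort _ _), ← Multiset.sum_coe,
        Multiset.sort_eq, p.parts_sum]
    · -- IsFreqCong
      obtain ⟨l₀, hcoe, hsort, hsc⟩ := hp
      have hperm : l₀.Perm (Multiset.sort p.parts (· ≥ ·)) :=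
        Multiset.coe_eq_coe.mp (hcoe.trans (Multiset.sort_eq _ _).symm)
      have hEq : l₀ = Multiset.sort p.parts (· ≥ ·) :=
        List.Perm.eq_of_pairwise' hsort (Multiset.pairwise_sort _ _) hperm
      exact hEq ▸ freqCong_freqOfList l₀ hsort hsc.1 hsc.2
  invFun := fun ⟨q, hq⟩ => by
    have hq0 : q.parts ≠ 0 := by
      intro h
      have := q.parts_sum
      rw [h] at this
      simp at this
      omega
    have hpos : ∀ x ∈ q.parts, 0 < x := fun x hx => q.parts_pos hx
    refine ⟨⟨(seqOf q.parts : List ℕ), ?_, ?_⟩, ?_⟩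
    · intro i hi
      exact pos_seqOf q.parts hq0 i (by exact_mod_cast hi)
    · show ((seqOf q.parts : List ℕ) : Multiset ℕ).sum = n
      rw [Multiset.sum_coe, sum_seqOf q.parts hpos, q.parts_sum]
    · exact ⟨seqOf q.parts, rfl, sorted_seqOf _, seqCong_seqOf q.parts hq0 hpos hq⟩
  left_inv := fun ⟨p, hp⟩ => by
    have hp0 : p.parts ≠ 0 := by
      intro h
      have := p.parts_sum
      rw [h] at this
      simp at this
      omega
    apply Subtype.ext
    apply Nat.Partition.ext
    show ((seqOf (freqOfList (Multiset.sort p.parts (· ≥ ·))) : List ℕ) : Multiset ℕ) = p.parts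
    rw [seqOf_freqOfList _ (Multiset.pairwise_sort _ _) ?_ ?_, Multiset.sort_eq]
    · intro x hx
      exact p.parts_pos (by rwa [← Multiset.mem_sort (r := (· ≥ ·))])
    · intro h
      apply hp0
      rw [← Multiset.sort_eq p.parts (· ≥ ·), h]
      rfl
  right_inv := fun ⟨q, hq⟩ => by
    have hq0 : q.parts ≠ 0 := by
      intro h
      have := q.parts_sum
      rw [h] at this
      simp at this
      omega
    have hpos : ∀ x ∈ q.parts, 0 < x := fun x hx => q.parts_pos hx
    apply Subtype.ext
    apply Nat.Partition.ext
    show freqOfList (Multiset.sort ((seqOf q.parts : List ℕ) : Multiset ℕ) (· ≥ ·)) = q.parts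
    have hsorteq : Multiset.sort ((seqOf q.parts : List ℕ) : Multiset ℕ) (· ≥ ·) = seqOf q.parts :=
      List.Perm.eq_of_pairwise' (Multiset.pairwise_sort _ _) (sorted_seqOf _)
        (Multiset.coe_eq_coe.mp (Multiset.sort_eq _ _))
    rw [hsorteq, freqOfList_seqOf q.parts hpos]

noncomputable def equivFreqSquares (n : ℕ) :
    {p : n.Partition // IsFreqCong p.parts} ≃ {p : n.Partition // AllSquares p.parts} where
  toFun := fun ⟨p, hp⟩ => by
    have hpos : ∀ x ∈ p.parts, 0 < x := fun x hx => p.parts_pos hx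
    refine ⟨⟨sqOf p.parts, ?_, ?_⟩, mem_sqOf hpos⟩
    · intro i hi
      obtain ⟨m, hm, rfl⟩ := mem_sqOf hpos i hi
      positivity
    · rw [sum_sqOf p.parts hpos hp, p.parts_sum]
  invFun := fun ⟨q, hq⟩ => by
    refine ⟨⟨frOf q.parts, ?_, ?_⟩, ?_⟩
    · exact fun h => pos_frOf _ _ h
    · rw [sum_frOf q.parts hq, q.parts_sum]
    · intro i hi
      rw [count_frOf_pos q.parts hq i hi]
      exact Dvd.intro _ rfl
  left_inv := fun ⟨p, hp⟩ => by
    apply Subtype.ext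
    apply Nat.Partition.ext
    exact frOf_sqOf p.parts (fun x hx => p.parts_pos hx) hp
  right_inv := fun ⟨q, hq⟩ => by
    apply Subtype.ext
    apply Nat.Partition.ext
    exact sqOf_frOf q.parts hq

end FSQ

theorem freq_eq_seq_eq_squares (n : ℕ) (hn : 1 ≤ n) :
    {p : n.Partition | IsFreqCong p.parts}.ncard
        = {p : n.Partition | IsSeqCong p.parts}.ncard
      ∧ {p : n.Partition | IsSeqCong p.parts}.ncard
        = {p : n.Partition | AllSquares p.parts}.ncard := by
  have h1 : {p : n.Partition | IsSeqCong p.parts}.ncard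
      = {p : n.Partition | IsFreqCong p.parts}.ncard := by
    rw [← Nat.card_coe_set_eq, ← Nat.card_coe_set_eq]
    exact Nat.card_congr (FSQ.equivSeqFreq n hn)
  have h2 : {p : n.Partition | IsFreqCong p.parts}.ncard
      = {p : n.Partition | AllSquares p.parts}.ncard := by
    rw [← Nat.card_coe_set_eq, ← Nat.card_coe_set_eq]
    exact Nat.card_congr (FSQ.equivFreqSquares n)
  exact ⟨h1.symm, h1 ▸ h2⟩
end

section
/- The generating function identity ∏_{k≥1} 1/(1 − q^{k·k}) = Σ_{n≥0} p_S(n) q^n holds as an identity of formal power series, where p_S(n) is the number of sequentially congruent partitions of n (p_S(0) = 1). -/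
namespace SCaux

noncomputable section
open PowerSeries Finset
open scoped Classical

/-- A convenience constructor for the power series whose coefficients indicate a subset. -/
def indicatorSeries (α : Type*) [Semiring α] (s : Set ℕ) : PowerSeries α :=
  PowerSeries.mk fun n => if n ∈ s then 1 else 0

theorem coeff_indicator {α : Type*} (s : Set ℕ) [Semiring α] (n : ℕ) :
    coeff n (indicatorSeries α s) = if n ∈ s then 1 else 0 :=
  coeff_mk _ _

theorem constantCoeff_indicator {α : Type*} (s : Set ℕ) [Semiring α] :
    constantCoeff (indicatorSeries α s) = if 0 ∈ s then 1 else 0 :=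
  rfl

theorem num_series' {α : Type*} [Field α] (i : ℕ) :
    (1 - (X : PowerSeries α) ^ (i + 1))⁻¹ = indicatorSeries α {k | i + 1 ∣ k} := by
  rw [PowerSeries.inv_eq_iff_mul_eq_one]
  · ext n
    cases n with
    | zero => simp [mul_sub, zero_pow, constantCoeff_indicator]
    | succ n =>
      simp only [coeff_one, if_false, mul_sub, mul_one, coeff_indicator,
        LinearMap.map_sub, reduceCtorEq]
      simp_rw [coeff_mul, coeff_X_pow, coeff_indicator, @boole_mul _ _ _ _]
      erw [@sum_ite _ _ _ _ _ (fun _ => Classical.propDecidable _), sum_ite]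
      simp_rw [@filter_filter _ _ _ _ _, sum_const_zero, add_zero, sum_const, nsmul_eq_mul, mul_one,
        sub_eq_iff_eq_add, zero_add]
      symm
      split_ifs with h
      · suffices #{a ∈ antidiagonal (n + 1) | i + 1 ∣ a.fst ∧ a.snd = i + 1} = 1 by
          simp only [Set.mem_setOf_eq]; convert congr_arg ((↑) : ℕ → α) this; norm_cast
        rw [card_eq_one]
        cases' h with p hp
        refine ⟨((i + 1) * (p - 1), i + 1), ?_⟩
        ext ⟨a₁, a₂⟩
        simp only [mem_filter, Prod.mk.injEq, HasAntidiagonal.mem_antidiagonal, mem_singleton]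
        constructor
        · rintro ⟨a_left, ⟨a, rfl⟩, rfl⟩
          refine ⟨?_, rfl⟩
          rw [Nat.mul_sub_left_distrib, ← hp, ← a_left, mul_one, Nat.add_sub_cancel]
        · rintro ⟨rfl, rfl⟩
          match p with
          | 0 => rw [mul_zero] at hp; cases hp
          | p + 1 => rw [hp]; simp [mul_add]
      · suffices #{a ∈ antidiagonal (n + 1) | i + 1 ∣ a.fst ∧ a.snd = i + 1} = 0 by
          simp only [Set.mem_setOf_eq]; convert congr_arg ((↑) : ℕ → α) this; norm_cast
        rw [card_eq_zero]
        apply eq_empty_of_forall_notMem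
        simp only [Prod.forall, mem_filter, not_and, HasAntidiagonal.mem_antidiagonal]
        rintro _ h₁ h₂ ⟨a, rfl⟩ rfl
        apply h
        simp [← h₂]
  · simp [zero_pow]

theorem partialGF_prop (α : Type*) [CommSemiring α] (n : ℕ) (s : Finset ℕ) (hs : ∀ i ∈ s, 0 < i)
    (c : ℕ → Set ℕ) (hc : ∀ i, i ∉ s → 0 ∈ c i) :
    #{p : n.Partition | (∀ j, p.parts.count j ∈ c j) ∧ ∀ j ∈ p.parts, j ∈ s} =
      coeff n (∏ i ∈ s, indicatorSeries α ((· * i) '' c i)) := by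
  simp_rw [coeff_prod, coeff_indicator, prod_boole, sum_boole]
  apply congr_arg
  simp only [mem_univ, forall_true_left, not_and, not_forall, exists_prop,
    Set.mem_image, not_exists]
  set φ : (a : Nat.Partition n) →
    a ∈ filter (fun p ↦ (∀ (j : ℕ), Multiset.count j p.parts ∈ c j) ∧ ∀ j ∈ p.parts, j ∈ s) univ →
    ℕ →₀ ℕ := fun p _ => {
      toFun := fun i => Multiset.count i p.parts • i
      support := Finset.filter (fun i => i ≠ 0) p.parts.toFinset
      mem_support_toFun := fun a => by
        simp only [smul_eq_mul, ne_eq, mul_eq_zero, Multiset.count_eq_zero]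
        rw [not_or, not_not]
        simp only [Multiset.mem_toFinset, not_not, mem_filter] }
  refine Finset.card_bij φ ?_ ?_ ?_
  · intro a ha
    simp only [φ, not_forall, not_exists, not_and, exists_prop, mem_filter]
    rw [mem_finsuppAntidiag]
    dsimp only [ne_eq, smul_eq_mul, id_eq, eq_mpr_eq_cast, le_eq_subset, Finsupp.coe_mk]
    simp only [mem_univ, forall_true_left, not_and, not_forall, exists_prop,
      mem_filter, true_and] at ha
    refine ⟨⟨?_, fun i ↦ ?_⟩, fun i _ ↦ ⟨a.parts.count i, ha.1 i, rfl⟩⟩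
    · conv_rhs => simp [← a.parts_sum]
      rw [sum_multiset_count_of_subset _ s]
      · simp only [smul_eq_mul]
      · intro i
        simp only [Multiset.mem_toFinset, not_not, mem_filter]
        apply ha.2
    · simp only [ne_eq, Multiset.mem_toFinset, not_not, mem_filter, and_imp]
      exact fun hi _ ↦ ha.2 i hi
  · intro p₁ hp₁ p₂ hp₂ h
    apply Nat.Partition.ext
    simp only [true_and, mem_univ, mem_filter] at hp₁ hp₂
    ext i
    simp only [φ, ne_eq, Multiset.mem_toFinset, not_not, smul_eq_mul, Finsupp.mk.injEq] at h
    by_cases hi : i = 0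
    · rw [hi]
      rw [Multiset.count_eq_zero_of_notMem]
      · rw [Multiset.count_eq_zero_of_notMem]
        intro a; exact Nat.lt_irrefl 0 (hs 0 (hp₂.2 0 a))
      intro a; exact Nat.lt_irrefl 0 (hs 0 (hp₁.2 0 a))
    · rw [← mul_left_inj' hi]
      rw [funext_iff] at h
      exact h.2 i
  · simp only [φ, mem_filter, mem_finsuppAntidiag, mem_univ, exists_prop, true_and, and_assoc]
    rintro f ⟨hf, hf₃, hf₄⟩
    have hf' : f ∈ finsuppAntidiag s n := mem_finsuppAntidiag.mpr ⟨hf, hf₃⟩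
    simp only [mem_finsuppAntidiag] at hf'
    refine ⟨⟨∑ i ∈ s, Multiset.replicate (f i / i) i, ?_, ?_⟩, ?_, ?_, ?_⟩
    · intro i hi
      simp only [exists_prop, Multiset.mem_sum, mem_map, Function.Embedding.coeFn_mk] at hi
      rcases hi with ⟨t, ht, z⟩
      apply hs
      rwa [Multiset.eq_of_mem_replicate z]
    · simp_rw [Multiset.sum_sum, Multiset.sum_replicate, Nat.nsmul_eq_mul]
      rw [← hf'.1]
      refine sum_congr rfl fun i hi => Nat.div_mul_cancel ?_
      rcases hf₄ i hi with ⟨w, _, hw₂⟩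
      rw [← hw₂]
      exact dvd_mul_left _ _
    · intro i
      simp_rw [Multiset.count_sum', Multiset.count_replicate, sum_ite_eq']
      split_ifs with h
      · rcases hf₄ i h with ⟨w, hw₁, hw₂⟩
        rwa [← hw₂, Nat.mul_div_cancel _ (hs i h)]
      · exact hc _ h
    · intro i hi
      rw [Multiset.mem_sum] at hi
      rcases hi with ⟨j, hj₁, hj₂⟩
      rwa [Multiset.eq_of_mem_replicate hj₂]
    · ext i
      simp_rw [Multiset.count_sum', Multiset.count_replicate, sum_ite_eq']
      simp only [ne_eq, Multiset.mem_toFinset, not_not, smul_eq_mul, ite_mul,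
        zero_mul, Finsupp.coe_mk]
      split_ifs with h
      · apply Nat.div_mul_cancel
        rcases hf₄ i h with ⟨w, _, hw₂⟩
        apply Dvd.intro_left _ hw₂
      · apply symm
        rw [← Finsupp.notMem_support_iff]
        exact notMem_mono hf'.2 h

end

end SCaux

/-! ### The combinatorial bijection -/

namespace SCaux

open Finset

/-- All members are positive squares. -/
def Sq (P : Multiset ℕ) : Prop := ∀ x ∈ P, ∃ j, 1 ≤ j ∧ x = j * j

/-- Largest `j` with `j*j ∈ P` (for multisets of squares). -/
def rr (P : Multiset ℕ) : ℕ := P.toFinset.sup Nat.sqrt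

/-- The `i`-th part of the associated sequentially congruent partition. -/
def lam (P : Multiset ℕ) (i : ℕ) : ℕ := ∑ j ∈ Finset.Icc i (rr P), j * P.count (j * j)

/-- The sorted list of parts of the associated sequentially congruent partition. -/
def Phi (P : Multiset ℕ) : List ℕ := (List.range (rr P)).map fun i => lam P (i + 1)

lemma lam_succ {P : Multiset ℕ} {i : ℕ} (h : i ≤ rr P) :
    lam P i = i * P.count (i * i) + lam P (i + 1) := by
  unfold lam
  rw [← Finset.Ioc_insert_left h, Finset.sum_insert (by simp), Finset.Icc_add_one_left_eq_Ioc]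

lemma lam_of_gt {P : Multiset ℕ} {i : ℕ} (h : rr P < i) : lam P i = 0 := by
  unfold lam
  rw [Finset.Icc_eq_empty (by omega), Finset.sum_empty]

lemma lam_anti (P : Multiset ℕ) {i j : ℕ} (h : i ≤ j) : lam P j ≤ lam P i :=
  Finset.sum_le_sum_of_subset (Finset.Icc_subset_Icc_left h)

lemma sqrt_mem {P : Multiset ℕ} (hP : Sq P) {x : ℕ} (hx : x ∈ P) :
    x = Nat.sqrt x * Nat.sqrt x ∧ 1 ≤ Nat.sqrt x ∧ Nat.sqrt x ≤ rr P := by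
  obtain ⟨j, hj1, rfl⟩ := hP x hx
  rw [Nat.sqrt_eq]
  refine ⟨rfl, hj1, ?_⟩
  have h := Finset.le_sup (f := Nat.sqrt) (Multiset.mem_toFinset.2 hx)
  rwa [Nat.sqrt_eq] at h

lemma double_sum (r : ℕ) (f : ℕ → ℕ) :
    ∑ i ∈ Finset.Icc 1 r, ∑ j ∈ Finset.Icc i r, f j = ∑ j ∈ Finset.Icc 1 r, j * f j := by
  rw [Finset.sum_comm' (t' := Finset.Icc 1 r) (s' := fun j => Finset.Icc 1 j)
    (by intro i j; simp only [Finset.mem_Icc]; omega)]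
  simp [Nat.card_Icc]

lemma sum_lam {P : Multiset ℕ} (hP : Sq P) :
    ∑ i ∈ Finset.Icc 1 (rr P), lam P i = P.sum := by
  unfold lam
  rw [double_sum]
  have h1 : ∀ j ∈ Finset.Icc 1 (rr P), j * (j * P.count (j * j)) = P.count (j*j) • (j*j) := by
    intro j _; rw [smul_eq_mul]; ring
  rw [Finset.sum_congr rfl h1, Finset.sum_multiset_count P]
  have him : ∑ x ∈ (Finset.Icc 1 (rr P)).image (fun j => j * j), P.count x • x
      = ∑ j ∈ Finset.Icc 1 (rr P), P.count (j * j) • (j * j) :=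
    Finset.sum_image (by intro a _ b _ h; exact Nat.mul_self_inj.mp h)
  rw [← him]
  refine (Finset.sum_subset ?_ ?_).symm
  · intro x hx
    obtain ⟨hx1, hx2, hx3⟩ := sqrt_mem hP (Multiset.mem_toFinset.1 hx)
    exact Finset.mem_image.2 ⟨Nat.sqrt x, Finset.mem_Icc.2 ⟨hx2, hx3⟩, hx1.symm⟩
  · intro x _ hx
    rw [Multiset.count_eq_zero_of_notMem (by simpa using hx), zero_smul]

lemma top_mem {P : Multiset ℕ} (hP : Sq P) (hne : P ≠ 0) : rr P * rr P ∈ P := by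
  obtain ⟨x, hx, hx2⟩ := Finset.exists_mem_eq_sup P.toFinset
    (by simpa using hne) Nat.sqrt
  obtain ⟨h1, _, _⟩ := sqrt_mem hP (Multiset.mem_toFinset.1 hx)
  have h2 : rr P = Nat.sqrt x := hx2
  rw [h2, ← h1]
  exact Multiset.mem_toFinset.1 hx

lemma lam_pos {P : Multiset ℕ} (hP : Sq P) (hne : P ≠ 0) {i : ℕ} (h1 : 1 ≤ i)
    (h2 : i ≤ rr P) : 0 < lam P i := by
  have ha := lam_anti P h2
  have hc : 0 < P.count (rr P * rr P) := Multiset.count_pos.2 (top_mem hP hne)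
  have hr : 1 ≤ rr P := le_trans h1 h2
  have hs' := lam_succ (le_refl (rr P))
  have h0 : lam P (rr P + 1) = 0 := lam_of_gt (by omega)
  have : 0 < lam P (rr P) := by
    rw [hs', h0, add_zero]; exact Nat.mul_pos (by omega) hc
  exact lt_of_lt_of_le this ha

lemma length_Phi (P : Multiset ℕ) : (Phi P).length = rr P := by simp [Phi]

lemma getD_Phi {P : Multiset ℕ} {i : ℕ} (h : i < rr P) :
    (Phi P).getD i 0 = lam P (i + 1) := by
  rw [List.getD_eq_getElem _ _ (by simpa [length_Phi] using h)]
  simp [Phi]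

lemma sorted_Phi (P : Multiset ℕ) : (Phi P).Pairwise (· ≥ ·) := by
  unfold Phi
  rw [List.pairwise_map]
  exact (List.pairwise_lt_range).imp fun h => lam_anti P (by omega)

lemma pos_Phi {P : Multiset ℕ} (hP : Sq P) : ∀ x ∈ Phi P, 0 < x := by
  intro x hx
  simp only [Phi, List.mem_map, List.mem_range] at hx
  obtain ⟨i, hi, rfl⟩ := hx
  have hne : P ≠ 0 := by
    rintro rfl; simp [rr] at hi
  exact lam_pos hP hne (by omega) (by omega)

lemma seqCong_Phi {P : Multiset ℕ} (hP : Sq P) :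
    (∀ i, i + 1 < (Phi P).length → (Phi P).getD i 0 % (i + 1) = (Phi P).getD (i + 1) 0 % (i + 1)) ∧
    (Phi P ≠ [] → (Phi P).length ∣ (Phi P).getD ((Phi P).length - 1) 0) := by
  constructor
  · intro i hi
    rw [length_Phi] at hi
    rw [getD_Phi (by omega), getD_Phi (by omega), lam_succ (by omega)]
    rw [Nat.mul_add_mod]
  · intro hne
    have hr : 0 < rr P := by
      by_contra h
      apply hne
      unfold Phi
      rw [Nat.eq_zero_of_not_pos h]
      rfl
    rw [length_Phi, getD_Phi (by omega)]
    have h1 : rr P - 1 + 1 = rr P := by omega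
    rw [h1, lam_succ (le_refl _), lam_of_gt (by omega), add_zero]
    exact Dvd.intro _ rfl

lemma sum_Phi {P : Multiset ℕ} (hP : Sq P) : (Phi P).sum = P.sum := by
  rw [← sum_lam hP]
  have h0 : (Phi P).sum = ∑ i ∈ Finset.range (rr P), lam P (i + 1) := rfl
  rw [h0, ← Finset.Ico_add_one_right_eq_Icc, Finset.sum_Ico_eq_sum_range]
  simp [add_comm]

/-- Difference quotient recovering multiplicities from a sequentially congruent list. -/
def gg (l : List ℕ) (j : ℕ) : ℕ := (l.getD (j - 1) 0 - l.getD j 0) / j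

/-- The inverse map: a multiset of squares from a sequentially congruent list. -/
def Psi (l : List ℕ) : Multiset ℕ :=
  ∑ j ∈ Finset.Icc 1 l.length, Multiset.replicate (gg l j) (j * j)

lemma getD_anti {l : List ℕ} (hl : l.Pairwise (· ≥ ·)) {a b : ℕ} (h : a ≤ b) :
    l.getD b 0 ≤ l.getD a 0 := by
  by_cases hb : b < l.length
  · have ha : a < l.length := lt_of_le_of_lt h hb
    rw [List.getD_eq_getElem _ _ hb, List.getD_eq_getElem _ _ ha]
    rcases eq_or_lt_of_le h with rfl | hlt
    · exact le_refl _
    · have := hl.rel_get_of_lt (a := ⟨a, ha⟩) (b := ⟨b, hb⟩) hlt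
      simpa using this
  · rw [List.getD_eq_default _ _ (by omega)]
    exact Nat.zero_le _

section Inverse

variable {l : List ℕ} (hl : l.Pairwise (· ≥ ·))
  (hsc : (∀ i, i + 1 < l.length → l.getD i 0 % (i + 1) = l.getD (i + 1) 0 % (i + 1)) ∧
    (l ≠ [] → l.length ∣ l.getD (l.length - 1) 0))
  (hpos : ∀ x ∈ l, 0 < x)

include hl hsc in
lemma dvd_sub_getD {j : ℕ} (h1 : 1 ≤ j) (h2 : j ≤ l.length) :
    j ∣ (l.getD (j - 1) 0 - l.getD j 0) := by
  rcases eq_or_lt_of_le h2 with rfl | hlt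
  · rw [List.getD_eq_default _ _ (le_refl _), Nat.sub_zero]
    exact hsc.2 (by intro h; rw [h] at h1; simp at h1)
  · have hmod := hsc.1 (j - 1) (by omega)
    have hj : j - 1 + 1 = j := by omega
    rw [hj] at hmod
    have hle : l.getD j 0 ≤ l.getD (j - 1) 0 := getD_anti hl (by omega)
    exact (Nat.modEq_iff_dvd' hle).mp (hmod.symm : Nat.ModEq j _ _)

include hl hsc in
lemma mul_gg {j : ℕ} (h1 : 1 ≤ j) (h2 : j ≤ l.length) :
    j * gg l j = l.getD (j - 1) 0 - l.getD j 0 :=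
  Nat.mul_div_cancel' (dvd_sub_getD hl hsc h1 h2) 

include hl hsc hpos in
lemma gg_last_pos (hne : l ≠ []) : 1 ≤ gg l l.length := by
  have hlen : 0 < l.length := List.length_pos_iff.2 hne
  have hmem : l.getD (l.length - 1) 0 ∈ l := by
    rw [List.getD_eq_getElem _ _ (by omega)]
    exact List.getElem_mem _
  have hp : 0 < l.getD (l.length - 1) 0 := hpos _ hmem
  have hdvd := hsc.2 hne
  have hge : l.length ≤ l.getD (l.length - 1) 0 := Nat.le_of_dvd hp hdvd
  have h0 : l.getD l.length 0 = 0 := List.getD_eq_default _ _ (le_refl _)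
  rw [gg, h0, Nat.sub_zero]
  exact Nat.one_le_div_iff hlen |>.2 hge

lemma count_Psi {j : ℕ} (h1 : 1 ≤ j) (h2 : j ≤ l.length) :
    (Psi l).count (j * j) = gg l j := by
  rw [Psi, Multiset.count_sum']
  rw [Finset.sum_eq_single j]
  · rw [Multiset.count_replicate, if_pos rfl]
  · intro b _ hbj
    rw [Multiset.count_replicate, if_neg (by simp only [Nat.mul_self_inj]; omega)]
  · intro h; exact absurd (Finset.mem_Icc.2 ⟨h1, h2⟩) h

lemma Sq_Psi : Sq (Psi l) := by
  intro x hx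
  rw [Psi, Multiset.mem_sum] at hx
  obtain ⟨j, hj, hx⟩ := hx
  rw [Finset.mem_Icc] at hj
  exact ⟨j, hj.1, Multiset.eq_of_mem_replicate hx⟩

include hl hsc hpos in
lemma rr_Psi (hne : l ≠ []) : rr (Psi l) = l.length := by
  have hlen : 0 < l.length := List.length_pos_iff.2 hne
  apply le_antisymm
  · apply Finset.sup_le
    intro x hx
    obtain ⟨j, hj1, rfl⟩ := Sq_Psi _ (Multiset.mem_toFinset.1 hx)
    rw [Nat.sqrt_eq]
    have := Multiset.mem_toFinset.1 hx
    rw [Psi, Multiset.mem_sum] at this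
    obtain ⟨j', hj', hmem⟩ := this
    have := Multiset.eq_of_mem_replicate hmem
    rw [Finset.mem_Icc] at hj'
    have : j = j' := Nat.mul_self_inj.mp this
    omega
  · have hmem : l.length * l.length ∈ Psi l := by
      rw [← Multiset.count_pos, count_Psi hlen (le_refl _)]
      exact gg_last_pos hl hsc hpos hne
    have h := Finset.le_sup (f := Nat.sqrt) (Multiset.mem_toFinset.2 hmem)
    rwa [Nat.sqrt_eq] at h

include hl hsc hpos in
lemma lam_Psi_aux (hne : l ≠ []) :
    ∀ d, d ≤ l.length → lam (Psi l) (l.length + 1 - d) = l.getD (l.length - d) 0 := by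
  have hrr := rr_Psi hl hsc hpos hne
  intro d
  induction d with
  | zero =>
    intro _
    rw [Nat.sub_zero, Nat.sub_zero, lam_of_gt (by omega), List.getD_eq_default _ _ (le_refl _)]
  | succ d ih =>
    intro hd
    have hi : l.length + 1 - (d + 1) = l.length - d := by omega
    set i := l.length - d with hidef
    have hi1 : 1 ≤ i := by omega
    have hi2 : i ≤ l.length := by omega
    rw [hi]
    rw [lam_succ (by omega), count_Psi hi1 hi2, mul_gg hl hsc hi1 hi2]
    have hip : i + 1 = l.length + 1 - d := by omega
    rw [hip, ih (by omega)]
    have hle : l.getD i 0 ≤ l.getD (i - 1) 0 := getD_anti hl (by omega)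
    have : l.length - (d + 1) = i - 1 := by omega
    rw [this]
    omega

include hl hsc hpos in
lemma Phi_Psi : Phi (Psi l) = l := by
  rcases eq_or_ne l [] with rfl | hne
  · have : Psi ([] : List ℕ) = 0 := by simp [Psi]
    rw [this]
    have : rr 0 = 0 := by simp [rr]
    simp [Phi, this]
  · have hrr := rr_Psi hl hsc hpos hne
    have hlen : (Phi (Psi l)).length = l.length := by rw [length_Phi, hrr]
    apply List.ext_getElem hlen
    intro i h1 h2
    have hi : i < rr (Psi l) := by omega
    have := getD_Phi hi
    rw [List.getD_eq_getElem _ _ h1] at this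
    rw [this]
    have haux := lam_Psi_aux hl hsc hpos hne (l.length - i) (by omega)
    have e1 : l.length + 1 - (l.length - i) = i + 1 := by omega
    have e2 : l.length - (l.length - i) = i := by omega
    rw [e1, e2] at haux
    rw [haux, List.getD_eq_getElem _ _ h2]

end Inverse

lemma Psi_Phi {P : Multiset ℕ} (hP : Sq P) : Psi (Phi P) = P := by
  set l := Phi P with hldef
  have hr : l.length = rr P := length_Phi P
  have hgg : ∀ j, 1 ≤ j → j ≤ rr P → gg l j = P.count (j * j) := by
    intro j h1 h2
    have ha : l.getD (j - 1) 0 = lam P j := by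
      have := getD_Phi (P := P) (i := j - 1) (by omega)
      rw [this]
      congr 1
      omega
    have hb : l.getD j 0 = lam P (j + 1) := by
      rcases eq_or_lt_of_le h2 with rfl | hlt
      · rw [List.getD_eq_default _ _ (by omega), lam_of_gt (by omega)]
      · exact getD_Phi hlt
    have hc := lam_succ (P := P) h2
    rw [gg, ha, hb]
    have : lam P j - lam P (j + 1) = j * P.count (j * j) := by omega
    rw [this, Nat.mul_div_cancel_left _ (by omega)]
  ext x
  rw [Psi, Multiset.count_sum']
  by_cases hx : ∃ j, 1 ≤ j ∧ j ≤ rr P ∧ x = j * j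
  · obtain ⟨j, h1, h2, rfl⟩ := hx
    rw [Finset.sum_eq_single j]
    · rw [Multiset.count_replicate, if_pos rfl]
      exact hgg j h1 h2
    · intro b hb hbj
      rw [Multiset.count_replicate, if_neg (by simp only [Nat.mul_self_inj]; omega)]
    · intro h
      exact absurd (Finset.mem_Icc.2 ⟨h1, by omega⟩) h
  · push_neg at hx
    have h0 : P.count x = 0 := by
      rw [Multiset.count_eq_zero]
      intro hmem
      obtain ⟨h1, h2, h3⟩ := sqrt_mem hP hmem
      exact hx (Nat.sqrt x) h2 h3 h1
    rw [h0]
    apply Finset.sum_eq_zero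
    intro j hj
    rw [Finset.mem_Icc, hr] at hj
    rw [Multiset.count_replicate, if_neg (fun h => hx j hj.1 hj.2 h.symm)]

end SCaux

/-- `p_S(n)`: the number of sequentially congruent partitions of `n`
(with `p_S(0) = 1`, counting the empty partition). -/
noncomputable def pS (n : ℕ) : ℕ :=
  {s : Multiset ℕ | (∀ x ∈ s, 0 < x) ∧ IsSeqCong s ∧ s.sum = n}.ncard


namespace SCaux

open Finset
open scoped Classical in
/-- Partitions of `n` into parts that are squares `k*k` with `1 ≤ k ≤ n`. -/
noncomputable def SqParts (n : ℕ) : Finset (Nat.Partition n) :=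
  Finset.univ.filter fun p => ∀ j ∈ p.parts, j ∈ (Finset.Icc 1 n).image fun k => k * k

lemma Sq_of_mem_SqParts {n : ℕ} {p : Nat.Partition n} (hp : p ∈ SqParts n) : Sq p.parts := by
  rw [SqParts, Finset.mem_filter] at hp
  intro x hx
  obtain ⟨k, hk, rfl⟩ := Finset.mem_image.1 (hp.2 x hx)
  rw [Finset.mem_Icc] at hk
  exact ⟨k, hk.1, rfl⟩

lemma pS_eq_card_SqParts (n : ℕ) : pS n = #(SqParts n) := by
  classical
  set F : Nat.Partition n → Multiset ℕ := fun p => ((Phi p.parts : List ℕ) : Multiset ℕ) with hF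
  have himg : {s : Multiset ℕ | (∀ x ∈ s, 0 < x) ∧ IsSeqCong s ∧ s.sum = n}
      = F '' ↑(SqParts n) := by
    ext s
    simp only [Set.mem_setOf_eq, Set.mem_image, Finset.mem_coe]
    constructor
    · rintro ⟨hpos, ⟨l, hls, hlsort, hlsc⟩, hsum⟩
      have hlpos : ∀ x ∈ l, 0 < x := fun x hx => hpos x (hls ▸ Multiset.mem_coe.2 hx)
      have hsc' : (∀ i, i + 1 < l.length →
            l.getD i 0 % (i + 1) = l.getD (i + 1) 0 % (i + 1)) ∧
          (l ≠ [] → l.length ∣ l.getD (l.length - 1) 0) := hlsc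
      have hSqP : Sq (Psi l) := Sq_Psi
      have hPhiPsi : Phi (Psi l) = l := Phi_Psi hlsort hsc' hlpos
      have hsuml : l.sum = n := by
        rw [← hsum, ← hls, Multiset.sum_coe]
      have hsumP : (Psi l).sum = n := by
        have h1 := sum_Phi hSqP
        rw [hPhiPsi] at h1
        rw [← h1, hsuml]
      have hposP : ∀ x ∈ Psi l, 0 < x := by
        intro x hx
        obtain ⟨j, hj1, rfl⟩ := hSqP x hx
        positivity
      refine ⟨⟨Psi l, fun {x} hx => hposP x hx, hsumP⟩, ?_, ?_⟩
      · rw [SqParts, Finset.mem_filter]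
        refine ⟨Finset.mem_univ _, ?_⟩
        intro j hj
        obtain ⟨k, hk1, rfl⟩ := hSqP j hj
        have hle : k * k ≤ n := by
          rw [← hsumP]
          exact Multiset.single_le_sum (fun _ _ => Nat.zero_le _) _ hj
        have hkk : k ≤ k * k := Nat.le_mul_of_pos_left k (by omega)
        exact Finset.mem_image.2 ⟨k, Finset.mem_Icc.2 ⟨hk1, by omega⟩, rfl⟩
      · rw [hF]
        simp only
        rw [hPhiPsi, hls]
    · rintro ⟨p, hp, rfl⟩
      have hSq : Sq p.parts := Sq_of_mem_SqParts hp
      have hsum : (F p).sum = n := by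
        rw [hF]
        simp only
        rw [Multiset.sum_coe, sum_Phi hSq, p.parts_sum]
      refine ⟨?_, ⟨Phi p.parts, rfl, sorted_Phi _, seqCong_Phi hSq⟩, hsum⟩
      intro x hx
      exact pos_Phi hSq x (Multiset.mem_coe.1 hx)
  have hinj : Set.InjOn F ↑(SqParts n) := by
    intro p₁ hp₁ p₂ hp₂ h
    have hperm : (Phi p₁.parts).Perm (Phi p₂.parts) := Multiset.coe_eq_coe.1 h
    haveI : IsAntisymm ℕ (· ≥ ·) := ⟨fun a b h1 h2 => le_antisymm h2 h1⟩
    have heq : Phi p₁.parts = Phi p₂.parts :=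
      List.Perm.eq_of_pairwise (fun _ _ _ _ h1 h2 => le_antisymm h2 h1) (sorted_Phi _) (sorted_Phi _) hperm
    have h1 : p₁.parts = p₂.parts := by
      rw [← Psi_Phi (Sq_of_mem_SqParts hp₁), ← Psi_Phi (Sq_of_mem_SqParts hp₂), heq]
    exact Nat.Partition.ext h1
  rw [pS, himg, Set.ncard_image_of_injOn hinj, Set.ncard_coe_finset]

end SCaux

/-- The formal power series identity `∏_{k ≥ 1} (1 − q^{k²})⁻¹ = Σ_n p_S(n) qⁿ`:
only factors with `k ≤ n` affect the coefficient of `qⁿ`, so the identity is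
equivalent to the statement that for every `n` the `n`-th coefficient of the
truncated product `∏_{k=1}^{n} (1 − q^{k²})⁻¹` equals `p_S(n)`. -/


theorem seqCong_generating_function (n : ℕ) :
    PowerSeries.coeff n
        (∏ k ∈ Finset.Icc 1 n, (1 - PowerSeries.X ^ (k * k) : PowerSeries ℚ)⁻¹)
      = (pS n : ℚ) := by
  classical
  have hsq : ∀ i ∈ (Finset.Icc 1 n).image (fun k => k * k), 0 < i := by
    intro i hi
    simp only [Finset.mem_image, Finset.mem_Icc] at hi
    obtain ⟨k, ⟨hk1, _⟩, rfl⟩ := hi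
    positivity
  have hgf := SCaux.partialGF_prop ℚ n ((Finset.Icc 1 n).image (fun k => k * k)) hsq
      (fun _ => Set.univ) (fun _ _ => trivial)
  have hprod : (∏ i ∈ (Finset.Icc 1 n).image (fun k => k * k),
        SCaux.indicatorSeries ℚ ((· * i) '' Set.univ))
      = ∏ k ∈ Finset.Icc 1 n, (1 - PowerSeries.X ^ (k * k) : PowerSeries ℚ)⁻¹ := by
    rw [Finset.prod_image (by intro a _ b _ h; exact Nat.mul_self_inj.mp h)]
    apply Finset.prod_congr rfl
    intro k hk
    rw [Finset.mem_Icc] at hk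
    have h1 : 0 < k * k := Nat.mul_pos hk.1 hk.1
    have h2 : k * k - 1 + 1 = k * k := by omega
    have hset : ((· * (k * k)) '' Set.univ) = {m : ℕ | k * k ∣ m} := by
      ext x
      simp only [Set.image_univ, Set.mem_range, Set.mem_setOf_eq]
      constructor
      · rintro ⟨c, rfl⟩
        exact Dvd.intro_left c rfl
      · rintro ⟨c, rfl⟩
        exact ⟨c, mul_comm _ _⟩
    rw [hset, ← h2, SCaux.num_series']
  rw [hprod] at hgf
  rw [SCaux.pS_eq_card_SqParts, ← hgf]
  norm_cast
  congr 1
  ext p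
  rw [SCaux.SqParts]
  simp
end

section
/- For a nonempty partition λ with r parts, λ is sequentially congruent if and only if there exist nonnegative integers c₁, ..., c_r with c_r ≥ 1 such that λ_i = Σ_{m=i}^{r} m·c_m for every 1 ≤ i ≤ r. -/
lemma icc_split (i r : ℕ) (h : i ≤ r) :
    Finset.Icc i r = insert i (Finset.Icc (i + 1) r) := by
  exact (Finset.insert_Icc_add_one_left_eq_Icc h).symm

/-- A nonempty partition `λ₁ ≥ ... ≥ λ_r ≥ 1` is sequentially congruent iff
there are `c₁, ..., c_r ≥ 0` with `c_r ≥ 1` such that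
`λ_i = Σ_{m=i}^r m · c_m` for all `1 ≤ i ≤ r`. -/
theorem seqCong_iff_cm (l : List ℕ) (hne : l ≠ []) (hsort : l.Pairwise (· ≥ ·))
    (hpos : ∀ x ∈ l, 0 < x) :
    SeqCongList l ↔
      ∃ c : ℕ → ℕ, 1 ≤ c l.length ∧
        ∀ i, 1 ≤ i → i ≤ l.length →
          l.getD (i - 1) 0 = ∑ m ∈ Finset.Icc i l.length, m * c m := by
  set r := l.length with hr
  have hr1 : 1 ≤ r := by
    rw [hr, Nat.one_le_iff_ne_zero, Ne, List.length_eq_zero_iff]; exact hne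
  have hmono : ∀ j, j + 1 < r → l.getD (j + 1) 0 ≤ l.getD j 0 := by
    intro j hj
    have h1 : j < r := Nat.lt_of_succ_lt hj
    rw [List.getD_eq_getElem l 0 hj, List.getD_eq_getElem l 0 h1]
    exact List.pairwise_iff_get.mp hsort ⟨j, h1⟩ ⟨j + 1, hj⟩ (Nat.lt_succ_self j)
  have hlast_pos : 0 < l.getD (r - 1) 0 := by
    have h1 : r - 1 < r := Nat.sub_lt hr1 Nat.one_pos
    rw [List.getD_eq_getElem l 0 h1]
    exact hpos _ (List.getElem_mem h1)
  constructor
  · rintro ⟨hmod, hdvd⟩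
    have hdvd' : r ∣ l.getD (r - 1) 0 := hdvd hne
    set c : ℕ → ℕ := fun m =>
      if m = r then l.getD (r - 1) 0 / r
      else (l.getD (m - 1) 0 - l.getD m 0) / m with hc
    have hcr : r * c r = l.getD (r - 1) 0 := by
      simp only [hc, if_pos rfl]
      exact Nat.mul_div_cancel' hdvd'
    have hci : ∀ i, 1 ≤ i → i < r → i * c i = l.getD (i - 1) 0 - l.getD i 0 := by
      intro i h1 h2
      have hidx : (i - 1) + 1 = i := Nat.succ_pred_eq_of_pos h1
      have hmod' := hmod (i - 1) (by rw [hidx]; exact h2)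
      rw [hidx] at hmod'
      have hle : l.getD i 0 ≤ l.getD (i - 1) 0 := by
        have := hmono (i - 1) (by rw [hidx]; exact h2)
        rwa [hidx] at this
      have hdvd2 : i ∣ l.getD (i - 1) 0 - l.getD i 0 :=
        (Nat.modEq_iff_dvd' hle).mp (Nat.ModEq.symm hmod')
      simp only [hc, if_neg (Nat.ne_of_lt h2)]
      exact Nat.mul_div_cancel' hdvd2
    refine ⟨c, ?_, ?_⟩
    · have : r ≤ l.getD (r - 1) 0 := Nat.le_of_dvd hlast_pos hdvd'
      simp only [hc, if_pos rfl]
      exact (Nat.one_le_div_iff (Nat.lt_of_lt_of_le Nat.zero_lt_one hr1)).mpr this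
    · have key : ∀ d i, i + d = r → 1 ≤ i →
          l.getD (i - 1) 0 = ∑ m ∈ Finset.Icc i r, m * c m := by
        intro d
        induction d with
        | zero =>
          intro i hi _
          simp only [Nat.add_zero] at hi
          subst hi
          rw [Finset.Icc_self, Finset.sum_singleton, hcr]
        | succ d ih =>
          intro i hi h1
          have hir : i < r := by omega
          have hsum := ih (i + 1) (by omega) (by omega)
          simp only [Nat.add_sub_cancel] at hsum
          rw [icc_split i r (le_of_lt hir), Finset.sum_insert (by simp),
            ← hsum, hci i h1 hir]
          have hle : l.getD i 0 ≤ l.getD (i - 1) 0 := by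
            have hidx : (i - 1) + 1 = i := Nat.succ_pred_eq_of_pos h1
            have := hmono (i - 1) (by rw [hidx]; exact hir)
            rwa [hidx] at this
          omega
      intro i h1 h2
      rcases Nat.lt_or_ge i r with h | h
      · exact key (r - i) i (by omega) h1
      · have hie : i = r := le_antisymm h2 h
        subst hie
        exact key 0 r (by omega) h1
  · rintro ⟨c, hc1, hsum⟩
    constructor
    · intro i hi
      have e1 : l.getD i 0 = ∑ m ∈ Finset.Icc (i + 1) r, m * c m := by
        have := hsum (i + 1) (by omega) (by omega)
        simpa using this
      have e2 : l.getD (i + 1) 0 = ∑ m ∈ Finset.Icc (i + 2) r, m * c m := by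
        have := hsum (i + 2) (by omega) (by omega)
        simpa using this
      rw [e1, icc_split (i + 1) r (by omega), Finset.sum_insert (by simp), ← e2,
        Nat.mul_add_mod]
    · intro _
      have := hsum r hr1 (le_refl r)
      rw [Finset.Icc_self, Finset.sum_singleton] at this
      exact ⟨c r, this⟩
end
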